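/- arXiv:math/0703277 — 6 statements merged into one kernel-verified Lean document; each statement's English description precedes it below -/
import Mathlib

section
/- Let K be an algebraically closed field of characteristic 0, g = (V, φ₀) a finite-dimensional Lie algebra with V = K^m, 𝒜 an admissible set at φ₀, and A a Noetherian complete local K-algebra with maximal ideal 𝔪 and residue field K. Then for every deformation φ' of φ₀ with base A there exists s ∈ G_m(A) = {id + w : w ∈ End_K(V)⊗𝔪} such that the deformation s*φ' := s∘φ'∘(s⁻¹×s⁻¹) satisfies (s*φ')^α = (φ₀)^α·1_A for every α ∈ 𝒜 (coordinates taken in the basis (e_k^{ij})). -/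
section Stmt4

/-- Bilinearity of a raw map over a commutative ring. -/
def IsBilin (A : Type) [CommRing A] {M : Type} [AddCommGroup M] [Module A M]
    (f : M → M → M) : Prop :=
  (∀ (a : A) (x x' y : M), f (a • x + x') y = a • f x y + f x' y) ∧
  (∀ (a : A) (x y y' : M), f x (a • y + y') = a • f x y + f x y')

/-- Linearity of a raw map. -/
def IsLin (A : Type) [CommRing A] {M : Type} [AddCommGroup M] [Module A M]
    (L : M → M) : Prop :=
  ∀ (a : A) (x y : M), L (a • x + y) = a • L x + L y

/-- The basis 2-cochain `e_k^{ij}` of `C²(K^m, K^m)`. -/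
def ekij {K : Type} [Field K] {m : ℕ} (i j k : Fin m) :
    (Fin m → K) → (Fin m → K) → (Fin m → K) :=
  fun x y => (x i * y j - x j * y i) • (Pi.single k 1 : Fin m → K)

/-- The 2-coboundary `dL` of `L ∈ C¹`, for the bracket `φ₀`. -/
def cob {K : Type} [Field K] {m : ℕ}
    (φ₀ : (Fin m → K) → (Fin m → K) → (Fin m → K)) (L : (Fin m → K) → (Fin m → K)) :
    (Fin m → K) → (Fin m → K) → (Fin m → K) :=
  fun x y => φ₀ x (L y) - φ₀ y (L x) - L (φ₀ x y)

/-- `id + W`, for a matrix `W` over `A`. -/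
def matMap {A : Type} [CommRing A] {m : ℕ} (W : Fin m → Fin m → A) (x : Fin m → A) :
    Fin m → A :=
  fun k => x k + ∑ j : Fin m, W k j * x j

namespace Stmt4Aux

section Basic
variable {R : Type} [CommRing R] {m : ℕ}

abbrev e {R : Type} [CommRing R] {m : ℕ} (i : Fin m) : Fin m → R := Pi.single i 1

lemma pi_expand (x : Fin m → R) : x = ∑ p : Fin m, x p • e p := by
  funext k
  simp [Finset.sum_apply, Pi.single_apply]

variable {f : (Fin m → R) → (Fin m → R) → (Fin m → R)}

lemma bilin_zero_left (h : IsBilin R f) (y : Fin m → R) : f 0 y = 0 := by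
  have h0 := h.1 1 0 0 y
  simp only [one_smul, add_zero] at h0
  have h1 : f 0 y + 0 = f 0 y + f 0 y := by rw [add_zero]; exact h0
  exact (add_left_cancel h1).symm

lemma bilin_zero_right (h : IsBilin R f) (x : Fin m → R) : f x 0 = 0 := by
  have h0 := h.2 1 x 0 0
  simp only [one_smul, add_zero] at h0
  have h1 : f x 0 + 0 = f x 0 + f x 0 := by rw [add_zero]; exact h0
  exact (add_left_cancel h1).symm

lemma bilin_smul_left (h : IsBilin R f) (a : R) (x y : Fin m → R) :
    f (a • x) y = a • f x y := by
  have h0 := h.1 a x 0 y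
  rw [add_zero, bilin_zero_left h, add_zero] at h0
  exact h0

lemma bilin_smul_right (h : IsBilin R f) (a : R) (x y : Fin m → R) :
    f x (a • y) = a • f x y := by
  have h0 := h.2 a x y 0
  rw [add_zero, bilin_zero_right h, add_zero] at h0
  exact h0

lemma bilin_add_left (h : IsBilin R f) (x x' y : Fin m → R) :
    f (x + x') y = f x y + f x' y := by
  have h0 := h.1 1 x x' y
  simpa using h0

lemma bilin_add_right (h : IsBilin R f) (x y y' : Fin m → R) :
    f x (y + y') = f x y + f x y' := by
  have h0 := h.2 1 x y y'
  simpa using h0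

lemma bilin_sum_smul_left (h : IsBilin R f) {ι : Type} (s : Finset ι)
    (a : ι → R) (u : ι → Fin m → R) (y : Fin m → R) :
    f (∑ i ∈ s, a i • u i) y = ∑ i ∈ s, a i • f (u i) y := by
  classical
  induction s using Finset.induction_on with
  | empty => simpa using bilin_zero_left h y
  | insert _ _ hns ih =>
    rw [Finset.sum_insert hns, Finset.sum_insert hns, h.1, ih]

lemma bilin_sum_smul_right (h : IsBilin R f) {ι : Type} (s : Finset ι)
    (a : ι → R) (u : ι → Fin m → R) (x : Fin m → R) :
    f x (∑ i ∈ s, a i • u i) = ∑ i ∈ s, a i • f x (u i) := by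
  classical
  induction s using Finset.induction_on with
  | empty => simpa using bilin_zero_right h x
  | insert _ _ hns ih =>
    rw [Finset.sum_insert hns, Finset.sum_insert hns, h.2, ih]

/-- expansion of a bilinear map through structure constants -/
lemma bilin_expand (h : IsBilin R f) (x y : Fin m → R) (k : Fin m) :
    f x y k = ∑ p : Fin m, ∑ q : Fin m, x p * y q * f (e p) (e q) k := by
  conv_lhs => rw [pi_expand x, pi_expand y]
  rw [bilin_sum_smul_left h]
  rw [Finset.sum_apply]
  refine Finset.sum_congr rfl fun p _ => ?_
  rw [bilin_sum_smul_right h]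
  simp only [Pi.smul_apply, Finset.sum_apply, smul_eq_mul, Finset.mul_sum]
  exact Finset.sum_congr rfl fun q _ => by ring

lemma lin_zero {L : (Fin m → R) → (Fin m → R)} (h : IsLin R L) : L 0 = 0 := by
  have h0 := h 1 0 0
  simp only [one_smul, add_zero] at h0
  have h1 : L 0 + 0 = L 0 + L 0 := by rw [add_zero]; exact h0
  exact (add_left_cancel h1).symm

lemma lin_expand {L : (Fin m → R) → (Fin m → R)} (h : IsLin R L) (x : Fin m → R) (k : Fin m) :
    L x k = ∑ p : Fin m, x p * L (e p) k := by
  conv_lhs => rw [pi_expand x]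
  have : ∀ (s : Finset (Fin m)), L (∑ p ∈ s, x p • e p) = ∑ p ∈ s, x p • L (e p) := by
    intro s
    induction s using Finset.induction_on with
    | empty => simpa using lin_zero h
    | insert _ _ hns ih =>
      rw [Finset.sum_insert hns, Finset.sum_insert hns, h, ih]
  rw [this, Finset.sum_apply]
  simp

end Basic
end Stmt4Aux
namespace Stmt4Aux
section Ideals
variable {A : Type} [CommRing A] {m : ℕ}

/-- identity "matrix" as a plain function -/
def idm {A : Type} [CommRing A] {m : ℕ} : Fin m → Fin m → A :=
  fun i j => if i = j then 1 else 0

lemma sum_idm_mul (k : Fin m) (g : Fin m → A) :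
    ∑ l : Fin m, (idm k l : A) * g l = g k := by
  simp [idm, ite_mul, Finset.sum_ite_eq]

lemma sum_idm_mul' (k : Fin m) (g : Fin m → A) :
    ∑ l : Fin m, (idm l k : A) * g l = g k := by
  simp [idm, ite_mul, Finset.sum_ite_eq']

lemma sub_mul_mem (I : Ideal A) {a a' b b' : A} (ha : a - a' ∈ I) (hb : b - b' ∈ I) :
    a * b - a' * b' ∈ I := by
  have h : a * b - a' * b' = (a - a') * b + a' * (b - b') := by ring
  rw [h]
  exact I.add_mem (I.mul_mem_right _ ha) (I.mul_mem_left _ hb)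

lemma sub_sum_mem (I : Ideal A) {ι : Type} (s : Finset ι) {f g : ι → A}
    (h : ∀ i ∈ s, f i - g i ∈ I) : (∑ i ∈ s, f i) - ∑ i ∈ s, g i ∈ I := by
  rw [← Finset.sum_sub_distrib]
  exact Submodule.sum_mem _ h

/-- **first-order expansion of conjugation**.  `Tw` is the inverse of `1 + w`;
`cA` are current structure constants, `ĉ` the constants of `φ₀`. -/
lemma stepCore (I J Mi : Ideal A)
    (hJJ : ∀ a ∈ J, ∀ b ∈ J, a * b ∈ I) (hJM : ∀ a ∈ J, ∀ b ∈ Mi, a * b ∈ I)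
    (hJI : J ≤ Mi)
    (w Tw : Fin m → Fin m → A) (hw : ∀ k l, w k l ∈ J)
    (hTw : ∀ k l, Tw k l - (idm k l - w k l) ∈ I)
    (cA ch : Fin m → Fin m → Fin m → A)
    (hc : ∀ i j k, cA i j k - ch i j k ∈ Mi) (i j k : Fin m) :
    (∑ l : Fin m, (idm k l + w k l) * ∑ p : Fin m, ∑ q : Fin m, Tw p i * Tw q j * cA p q l)
      - (cA i j k + ((∑ l : Fin m, w k l * ch i j l)
          - (∑ p : Fin m, w p i * ch p j k) - ∑ q : Fin m, w q j * ch i q k)) ∈ I := by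
  -- Z p l = ∑_q (idm q j - w q j) * cA p q l
  set Z : Fin m → Fin m → A := fun p l => ∑ q : Fin m, (idm q j - w q j) * cA p q l with hZ
  have hZval : ∀ p l, Z p l = cA p j l - ∑ q : Fin m, w q j * cA p q l := by
    intro p l
    simp only [hZ, sub_mul, Finset.sum_sub_distrib, sum_idm_mul']
  have hZJ : ∀ p l, Z p l - cA p j l ∈ J := by
    intro p l
    rw [hZval]
    have : cA p j l - (∑ q : Fin m, w q j * cA p q l) - cA p j l
        = -(∑ q : Fin m, w q j * cA p q l) := by ring
    rw [this]
    exact J.neg_mem (Submodule.sum_mem _ fun q _ => J.mul_mem_right _ (hw q j))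
  -- Y l = ∑_p (idm p i - w p i) * Z p l
  set Y : Fin m → A := fun l => ∑ p : Fin m, (idm p i - w p i) * Z p l with hY
  have hYval : ∀ l, Y l = Z i l - ∑ p : Fin m, w p i * Z p l := by
    intro l
    simp only [hY, sub_mul, Finset.sum_sub_distrib, sum_idm_mul']
  have hYJ : ∀ l, Y l - cA i j l ∈ J := by
    intro l
    have h1 : Y l - cA i j l = (Z i l - cA i j l) - ∑ p : Fin m, w p i * Z p l := by
      rw [hYval]; ring
    rw [h1]
    exact J.sub_mem (hZJ i l)
      (Submodule.sum_mem _ fun p _ => J.mul_mem_right _ (hw p i))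
  -- the LHS big sum with exact Tw replaced by (idm - w), mod I
  have hrepl :
      (∑ l : Fin m, (idm k l + w k l) * ∑ p : Fin m, ∑ q : Fin m, Tw p i * Tw q j * cA p q l)
      - (∑ l : Fin m, (idm k l + w k l) * Y l) ∈ I := by
    refine sub_sum_mem I _ fun l _ => ?_
    refine sub_mul_mem I (by simp) ?_
    refine sub_sum_mem I _ fun p _ => ?_
    have : (idm p i - w p i) * Z p l
        = ∑ q : Fin m, (idm p i - w p i) * ((idm q j - w q j) * cA p q l) := by
      rw [hZ, Finset.mul_sum]
    rw [this]
    refine sub_sum_mem I _ fun q _ => ?_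
    rw [← mul_assoc]
    exact sub_mul_mem I (sub_mul_mem I (hTw p i) (hTw q j)) (by simp)
  -- compute ∑_l (idm k l + w k l) * Y l = Y k + ∑_l w k l * Y l
  have hmain : (∑ l : Fin m, (idm k l + w k l) * Y l)
      = Y k + ∑ l : Fin m, w k l * Y l := by
    simp only [add_mul, Finset.sum_add_distrib, sum_idm_mul]
  -- Y k ≡ cA i j k - ∑_q w q j ch i q k - ∑_p w p i ch p j k  mod I
  have hYk : Y k - (cA i j k - (∑ q : Fin m, w q j * ch i q k)
      - ∑ p : Fin m, w p i * ch p j k) ∈ I := by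
    have h1 : Y k - (cA i j k - (∑ q : Fin m, w q j * ch i q k)
        - ∑ p : Fin m, w p i * ch p j k)
      = ((∑ q : Fin m, w q j * ch i q k) - ∑ q : Fin m, w q j * cA i q k)
        + ((∑ p : Fin m, w p i * ch p j k) - ∑ p : Fin m, w p i * Z p k) := by
      rw [hYval, hZval]; ring
    rw [h1]
    refine I.add_mem ?_ ?_
    · refine sub_sum_mem I _ fun q _ => ?_
      rw [show w q j * ch i q k - w q j * cA i q k = w q j * (ch i q k - cA i q k) by ring]
      exact hJM _ (hw q j) _ (by rw [← neg_sub]; exact Mi.neg_mem (hc i q k))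
    · refine sub_sum_mem I _ fun p _ => ?_
      rw [show w p i * ch p j k - w p i * Z p k = w p i * (ch p j k - Z p k) by ring]
      refine hJM _ (hw p i) _ ?_
      have h2 : ch p j k - Z p k = -((Z p k - cA p j k) + (cA p j k - ch p j k)) := by ring
      rw [h2]
      exact Mi.neg_mem (Mi.add_mem (hJI (hZJ p k)) (hc p j k))
  -- ∑_l w k l * Y l ≡ ∑_l w k l * ch i j l  mod I
  have hlast : (∑ l : Fin m, w k l * Y l) - (∑ l : Fin m, w k l * ch i j l) ∈ I := by
    refine sub_sum_mem I _ fun l _ => ?_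
    rw [show w k l * Y l - w k l * ch i j l = w k l * (Y l - ch i j l) by ring]
    refine hJM _ (hw k l) _ ?_
    have h2 : Y l - ch i j l = (Y l - cA i j l) + (cA i j l - ch i j l) := by ring
    rw [h2]
    exact Mi.add_mem (hJI (hYJ l)) (hc i j l)
  -- combine
  have hfinal := I.add_mem (I.add_mem hrepl hYk) hlast
  have heq : ((∑ l : Fin m, (idm k l + w k l) * ∑ p : Fin m, ∑ q : Fin m, Tw p i * Tw q j * cA p q l)
      - (∑ l : Fin m, (idm k l + w k l) * Y l))
      + (Y k - (cA i j k - (∑ q : Fin m, w q j * ch i q k) - ∑ p : Fin m, w p i * ch p j k))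
      + ((∑ l : Fin m, w k l * Y l) - (∑ l : Fin m, w k l * ch i j l))
      = (∑ l : Fin m, (idm k l + w k l) * ∑ p : Fin m, ∑ q : Fin m, Tw p i * Tw q j * cA p q l)
      - (cA i j k + ((∑ l : Fin m, w k l * ch i j l)
          - (∑ p : Fin m, w p i * ch p j k) - ∑ q : Fin m, w q j * ch i q k)) := by
    rw [hmain]; ring
  rwa [heq] at hfinal

end Ideals
end Stmt4Aux
namespace Stmt4Aux
section Matrices
variable {K : Type} [Field K] {A : Type} [CommRing A] [Algebra K A] [IsLocalRing A] {m : ℕ}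

open IsLocalRing

/-- a matrix congruent to the identity mod the maximal ideal is invertible -/
lemma exists_inverse (pr : A →ₐ[K] K)
    (hpr : ∀ a : A, a ∈ maximalIdeal A ↔ pr a = 0)
    (S : Matrix (Fin m) (Fin m) A)
    (hS : ∀ k l, S k l - idm k l ∈ maximalIdeal A) :
    ∃ T : Matrix (Fin m) (Fin m) A, S * T = 1 ∧ T * S = 1 := by
  have hmap : S.map pr = 1 := by
    ext k l
    have h0 : pr (S k l - idm k l) = 0 := (hpr _).1 (hS k l)
    rw [map_sub] at h0
    have h1 : pr (S k l) = pr (idm k l) := sub_eq_zero.mp h0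
    rw [Matrix.map_apply, h1]
    by_cases hkl : k = l <;> simp [idm, Matrix.one_apply, hkl]
  have hdet : IsUnit S.det := by
    have h2 : pr.toRingHom S.det = (pr.toRingHom.mapMatrix S).det := RingHom.map_det _ _
    have h3 : (pr.toRingHom.mapMatrix S) = S.map pr := rfl
    rw [h3, hmap, Matrix.det_one] at h2
    by_contra hu
    have : S.det ∈ maximalIdeal A := (mem_maximalIdeal _).2 (mem_nonunits_iff.2 hu)
    have := (hpr _).1 this
    rw [show (pr.toRingHom S.det : K) = pr S.det from rfl] at h2
    rw [this] at h2
    exact zero_ne_one h2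
  exact ⟨S⁻¹, Matrix.mul_nonsing_inv S hdet, Matrix.nonsing_inv_mul S hdet⟩

end Matrices
end Stmt4Aux

namespace Stmt4Aux
section Matrices2
variable {A : Type} [CommRing A] {m : ℕ}

lemma inv_entries_congr (N : Ideal A) (S T S' T' : Matrix (Fin m) (Fin m) A)
    (hST : S * T = 1) (hTS : T * S = 1) (hS'T' : S' * T' = 1)
    (h : ∀ k l, S k l - S' k l ∈ N) : ∀ k l, T k l - T' k l ∈ N := by
  have key : T - T' = T * (S' - S) * T' := by
    have e1 : T * (S' * T') = T := by rw [hS'T', mul_one]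
    have e2 : T * S * T' = T' := by rw [hTS, one_mul]
    rw [mul_sub, sub_mul, e2, mul_assoc, e1]
  intro k l
  have : T k l - T' k l = (T * (S' - S) * T') k l := by
    rw [← key]; simp [Matrix.sub_apply]
  rw [this, Matrix.mul_apply]
  refine Submodule.sum_mem _ fun b _ => ?_
  rw [Matrix.mul_apply, Finset.sum_mul]
  refine Submodule.sum_mem _ fun a _ => ?_
  have hmem : S' a b - S a b ∈ N := by rw [← neg_sub]; exact N.neg_mem (h a b)
  have : T k a * (S' - S) a b * T' b l = T k a * ((S' a b - S a b) * T' b l) := by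
    rw [Matrix.sub_apply]; ring
  rw [this]
  exact N.mul_mem_left _ (N.mul_mem_right _ hmem)

lemma inv_approx (I J : Ideal A) (hJJ : ∀ a ∈ J, ∀ b ∈ J, a * b ∈ I)
    (w : Fin m → Fin m → A) (hw : ∀ k l, w k l ∈ J)
    (T : Matrix (Fin m) (Fin m) A)
    (hTS : T * (1 + Matrix.of w) = 1) :
    (∀ k l, T k l - idm k l ∈ J) ∧ (∀ k l, T k l - (idm k l - w k l) ∈ I) := by
  have key : (1 : Matrix (Fin m) (Fin m) A) - T = T * Matrix.of w := by
    have : T * 1 + T * Matrix.of w = 1 := by rw [← mul_add, hTS]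
    rw [mul_one] at this
    linear_combination (norm := module) -this
  have hTw : ∀ k l, (T * Matrix.of w) k l ∈ J := by
    intro k l
    rw [Matrix.mul_apply]
    exact Submodule.sum_mem _ fun a _ => J.mul_mem_left _ (hw a l)
  have h1 : ∀ k l, T k l - idm k l ∈ J := by
    intro k l
    have : T k l - idm k l = -((1 - T) k l) := by
      simp [Matrix.sub_apply, Matrix.one_apply, idm]
    rw [this, key]
    exact J.neg_mem (hTw k l)
  refine ⟨h1, fun k l => ?_⟩
  have key2 : T - (1 - Matrix.of w) = (T * Matrix.of w) * Matrix.of w := by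
    have : (1 - T) * Matrix.of w = Matrix.of w - T * Matrix.of w := by
      rw [sub_mul, one_mul]
    rw [← key] at this ⊢
    linear_combination (norm := module) -this
  have : T k l - (idm k l - w k l) = ((T * Matrix.of w) * Matrix.of w) k l := by
    rw [← key2]
    simp [Matrix.sub_apply, Matrix.one_apply, idm]
  rw [this, Matrix.mul_apply]
  exact Submodule.sum_mem _ fun b _ => hJJ _ (hTw k b) _ (hw b l)

end Matrices2
end Stmt4Aux
namespace Stmt4Aux
section Conj
variable {A : Type} [CommRing A] {m : ℕ}

/-- the conjugated bracket -/
def conj (S T : Matrix (Fin m) (Fin m) A) (φ : (Fin m → A) → (Fin m → A) → (Fin m → A)) :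
    (Fin m → A) → (Fin m → A) → (Fin m → A) :=
  fun x y => S.mulVec (φ (T.mulVec x) (T.mulVec y))

lemma conj_bilin {S T : Matrix (Fin m) (Fin m) A} {φ} (h : IsBilin A φ) :
    IsBilin A (conj S T φ) := by
  constructor
  · intro a x x' y
    simp only [conj, Matrix.mulVec_add, Matrix.mulVec_smul]
    rw [h.1, Matrix.mulVec_add, Matrix.mulVec_smul]
  · intro a x y y'
    simp only [conj, Matrix.mulVec_add, Matrix.mulVec_smul]
    rw [h.2, Matrix.mulVec_add, Matrix.mulVec_smul]

lemma conj_alt {S T : Matrix (Fin m) (Fin m) A} {φ} (h : ∀ x, φ x x = 0) (x : Fin m → A) :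
    conj S T φ x x = 0 := by
  simp [conj, h, Matrix.mulVec_zero]

/-- structure constants of the conjugated bracket -/
lemma conj_const {S T : Matrix (Fin m) (Fin m) A} {φ} (h : IsBilin A φ) (i j k : Fin m) :
    conj S T φ (e i) (e j) k
      = ∑ l : Fin m, S k l * ∑ p : Fin m, ∑ q : Fin m, T p i * T q j * φ (e p) (e q) l := by
  have hTi : T.mulVec (e i) = fun p => T p i := by
    rw [show (e i : Fin m → A) = Pi.single i 1 from rfl, Matrix.mulVec_single]
    simp
    rfl
  have hTj : T.mulVec (e j) = fun q => T q j := by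
    rw [show (e j : Fin m → A) = Pi.single j 1 from rfl, Matrix.mulVec_single]
    simp
    rfl
  show (S.mulVec (φ (T.mulVec (e i)) (T.mulVec (e j)))) k = _
  rw [hTi, hTj]
  have : ∀ v : Fin m → A, S.mulVec v k = ∑ l : Fin m, S k l * v l := by
    intro v; simp [Matrix.mulVec, dotProduct]
  rw [this]
  refine Finset.sum_congr rfl fun l _ => ?_
  congr 1
  exact bilin_expand h _ _ l

/-- composition of conjugations -/
lemma conj_conj (S₁ T₁ S₂ T₂ : Matrix (Fin m) (Fin m) A) (φ) :
    conj S₂ T₂ (conj S₁ T₁ φ) = conj (S₂ * S₁) (T₁ * T₂) φ := by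
  funext x y
  simp [conj, Matrix.mulVec_mulVec]

lemma conj_one (φ : (Fin m → A) → (Fin m → A) → (Fin m → A)) : conj 1 1 φ = φ := by
  funext x y
  simp [conj, Matrix.one_mulVec]

end Conj
end Stmt4Aux
namespace Stmt4Aux
section Kside
variable {K : Type} [Field K] {m : ℕ}

lemma alt_swap {φ : (Fin m → K) → (Fin m → K) → (Fin m → K)}
    (hb : IsBilin K φ) (ha : ∀ x, φ x x = 0) (x y : Fin m → K) :
    φ y x = -φ x y := by
  have h0 := ha (x + y)
  rw [bilin_add_left hb, bilin_add_right hb, bilin_add_right hb, ha, ha] at h0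
  have : φ x y + φ y x = 0 := by
    have := h0
    abel_nf at this ⊢
    linear_combination (norm := abel) this
  linear_combination (norm := abel) this

lemma bilin_expand_left {f : (Fin m → K) → (Fin m → K) → (Fin m → K)}
    (h : IsBilin K f) (z : Fin m → K) (i k : Fin m) :
    f (e i) z k = ∑ q : Fin m, z q * f (e i) (e q) k := by
  rw [bilin_expand h]
  rw [Finset.sum_comm]
  refine Finset.sum_congr rfl fun q _ => ?_
  simp [Pi.single_apply, ite_mul, Finset.sum_ite_eq']

lemma bilin_expand_right {f : (Fin m → K) → (Fin m → K) → (Fin m → K)}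
    (h : IsBilin K f) (z : Fin m → K) (j k : Fin m) :
    f z (e j) k = ∑ p : Fin m, z p * f (e p) (e j) k := by
  rw [bilin_expand h]
  refine Finset.sum_congr rfl fun p _ => ?_
  simp [Pi.single_apply, mul_ite, ite_mul, Finset.sum_ite_eq']

/-- structure constants of a coboundary -/
lemma cob_const {φ₀ L : _} (hb : IsBilin K φ₀) (ha : ∀ x : Fin m → K, φ₀ x x = 0)
    (hL : IsLin K L) (i j k : Fin m) :
    cob φ₀ L (e i) (e j) k
      = (∑ q : Fin m, L (e j) q * φ₀ (e i) (e q) k)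
        + (∑ p : Fin m, L (e i) p * φ₀ (e p) (e j) k)
        - ∑ l : Fin m, φ₀ (e i) (e j) l * L (e l) k := by
  show φ₀ (e i) (L (e j)) k - φ₀ (e j) (L (e i)) k - L (φ₀ (e i) (e j)) k = _
  rw [bilin_expand_left hb (L (e j)) i k]
  rw [bilin_expand_left hb (L (e i)) j k]
  rw [lin_expand hL]
  have hsw : ∀ q, φ₀ (e j) (e q) k = -φ₀ (e q) (e j) k := by
    intro q
    rw [alt_swap hb ha]
    simp
  simp only [hsw]
  have hneg : ∑ x : Fin m, L (e i) x * -φ₀ (e x) (e j) k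
      = -∑ x : Fin m, L (e i) x * φ₀ (e x) (e j) k := by
    rw [← Finset.sum_neg_distrib]
    exact Finset.sum_congr rfl fun x _ => by ring
  rw [hneg]
  ring

lemma ekij_bilin (i j k : Fin m) : IsBilin K (ekij (K := K) i j k) := by
  constructor
  · intro a x x' y
    funext l
    simp only [ekij, Pi.add_apply, Pi.smul_apply, smul_eq_mul, Pi.single_apply]
    split_ifs <;> ring
  · intro a x y y'
    funext l
    simp only [ekij, Pi.add_apply, Pi.smul_apply, smul_eq_mul, Pi.single_apply]
    split_ifs <;> ring

lemma ekij_alt (i j k : Fin m) (x : Fin m → K) : ekij (K := K) i j k x x = 0 := by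
  simp [ekij, mul_comm]

lemma ekij_eval (i' j' k' i j k : Fin m) (hij : i < j) (h'ij : i' < j') :
    ekij (K := K) i' j' k' (e i) (e j) k = if (i', j', k') = (i, j, k) then 1 else 0 := by
  show ((e i : Fin m → K) i' * (e j : Fin m → K) j'
      - (e i : Fin m → K) j' * (e j : Fin m → K) i') * (Pi.single k' 1 : Fin m → K) k = _
  simp only [e, Pi.single_apply, Prod.mk.injEq]
  split_ifs with h1 h2 h3 h4 h5 h6 h7 <;> try (first | ring | skip)
  all_goals try (exfalso; omega)
  all_goals simp_all <;> try ring
end Kside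
end Stmt4Aux
namespace Stmt4Aux
section Kside2
variable {K : Type} [Field K] {m : ℕ}

lemma bilin_smulsum {ι : Type} (s : Finset ι) (c : ι → K)
    (F : ι → (Fin m → K) → (Fin m → K) → (Fin m → K))
    (h : ∀ i ∈ s, IsBilin K (F i)) :
    IsBilin K (fun x y => ∑ i ∈ s, c i • F i x y) := by
  constructor
  · intro a x x' y
    have h1 : ∀ i ∈ s, c i • F i (a • x + x') y
        = a • (c i • F i x y) + c i • F i x' y := by
      intro i hi
      rw [(h i hi).1, smul_add, smul_comm]
    show (∑ i ∈ s, c i • F i (a • x + x') y) = _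
    rw [Finset.sum_congr rfl h1, Finset.sum_add_distrib, Finset.smul_sum]

  · intro a x y y'
    have h1 : ∀ i ∈ s, c i • F i x (a • y + y')
        = a • (c i • F i x y) + c i • F i x y' := by
      intro i hi
      rw [(h i hi).2, smul_add, smul_comm]
    show (∑ i ∈ s, c i • F i x (a • y + y')) = _
    rw [Finset.sum_congr rfl h1, Finset.sum_add_distrib, Finset.smul_sum]


lemma span_vanish (𝒜 : Set (Fin m × Fin m × Fin m))
    (h𝒜 : ∀ α ∈ 𝒜, α.1 < α.2.1)
    (v : (Fin m → K) → (Fin m → K) → (Fin m → K))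
    (hv : v ∈ Submodule.span K
      {f | ∃ i j k : Fin m, i < j ∧ (i, j, k) ∉ 𝒜 ∧ f = ekij (K := K) i j k})
    (i j k : Fin m) (hα : (i, j, k) ∈ 𝒜) :
    v (e i) (e j) k = 0 := by
  have hij : i < j := h𝒜 _ hα
  induction hv using Submodule.span_induction with
  | mem f hf =>
    obtain ⟨i', j', k', h'ij, hnot, rfl⟩ := hf
    rw [ekij_eval i' j' k' i j k hij h'ij]
    rw [if_neg]
    intro hcontra
    exact hnot (hcontra ▸ hα)
  | zero => rfl
  | add f g _ _ hf hg => show f (e i) (e j) k + g (e i) (e j) k = 0; rw [hf, hg, add_zero]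
  | smul a f _ hf => show a * f (e i) (e j) k = 0; rw [hf, mul_zero]

end Kside2
end Stmt4Aux
namespace Stmt4Aux
section Step
open IsLocalRing
variable {K : Type} [Field K] {m : ℕ}
variable {A : Type} [CommRing A] [Algebra K A] [IsLocalRing A] [IsNoetherianRing A]

lemma step_exists
    (φ₀ : (Fin m → K) → (Fin m → K) → (Fin m → K))
    (hbil : IsBilin K φ₀) (halt : ∀ x, φ₀ x x = 0)
    (𝒜 : Set (Fin m × Fin m × Fin m))
    (h𝒜 : ∀ α ∈ 𝒜, α.1 < α.2.1)
    (hadm1 : ∀ ψ : (Fin m → K) → (Fin m → K) → (Fin m → K),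
      IsBilin K ψ → (∀ x, ψ x x = 0) →
      ∃ v ∈ Submodule.span K {f | ∃ i j k : Fin m, i < j ∧ (i, j, k) ∉ 𝒜 ∧ f = ekij i j k},
        ∃ L, IsLin K L ∧ ψ = v + cob φ₀ L)
    (pr : A →ₐ[K] K)
    (hpr : ∀ a : A, a ∈ maximalIdeal A ↔ pr a = 0)
    (n : ℕ) (c : Fin m → Fin m → Fin m → A)
    (hc1 : ∀ i j k, c i j k - algebraMap K A (φ₀ (e i) (e j) k) ∈ maximalIdeal A)
    (hc2 : ∀ i j k, (i, j, k) ∈ 𝒜 →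
      c i j k - algebraMap K A (φ₀ (e i) (e j) k) ∈ (maximalIdeal A) ^ (n + 1)) :
    ∃ w : Fin m → Fin m → A, (∀ k l, w k l ∈ (maximalIdeal A) ^ (n + 1)) ∧
      ∀ Tw : Matrix (Fin m) (Fin m) A, Tw * (1 + Matrix.of w) = 1 →
        ∀ i j k : Fin m, (i, j, k) ∈ 𝒜 →
          (∑ l : Fin m, (idm k l + w k l) * ∑ p : Fin m, ∑ q : Fin m,
              Tw p i * Tw q j * c p q l)
            - algebraMap K A (φ₀ (e i) (e j) k) ∈ (maximalIdeal A) ^ (n + 2) := by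
  classical
  have hJI : ∀ a ∈ (maximalIdeal A) ^ (n + 1), ∀ b ∈ maximalIdeal A,
      a * b ∈ (maximalIdeal A) ^ (n + 2) := by
    intro a ha b hb
    have h1 : a * b ∈ (maximalIdeal A) ^ (n + 1) * maximalIdeal A := Ideal.mul_mem_mul ha hb
    rwa [← pow_succ] at h1
  have hJJ : ∀ a ∈ (maximalIdeal A) ^ (n + 1), ∀ b ∈ (maximalIdeal A) ^ (n + 1),
      a * b ∈ (maximalIdeal A) ^ (n + 2) := by
    intro a ha b hb
    have h1 : a * b ∈ (maximalIdeal A) ^ (n + 1) * (maximalIdeal A) ^ (n + 1) :=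
      Ideal.mul_mem_mul ha hb
    rw [← pow_add] at h1
    exact Ideal.pow_le_pow_right (by omega) h1
  have hJM : (maximalIdeal A) ^ (n + 1) ≤ maximalIdeal A := Ideal.pow_le_self (by omega)
  -- generators of 𝔪^(n+1)
  obtain ⟨F, hF⟩ : ((maximalIdeal A) ^ (n + 1)).FG :=
    IsNoetherian.noetherian ((maximalIdeal A) ^ (n + 1))
  have hFJ : ∀ g ∈ F, g ∈ (maximalIdeal A) ^ (n + 1) :=
    fun g hg => hF ▸ Submodule.subset_span hg
  -- coefficients of the defects
  have hδ : ∀ α : Fin m × Fin m × Fin m, α ∈ 𝒜 →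
      ∃ f : A → A, ∑ g ∈ F, f g • g
        = c α.1 α.2.1 α.2.2 - algebraMap K A (φ₀ (e α.1) (e α.2.1) α.2.2) := by
    intro α hα
    have hmem := hc2 α.1 α.2.1 α.2.2 (by simpa using hα)
    rw [← hF] at hmem
    exact (Submodule.mem_span_finset.mp hmem).imp fun _ h => h.2
  set aco : Fin m × Fin m × Fin m → A → A :=
    fun α => if hα : α ∈ 𝒜 then Classical.choose (hδ α hα) else 0 with haco
  have haco_spec : ∀ α ∈ 𝒜, ∑ g ∈ F, aco α g • g
      = c α.1 α.2.1 α.2.2 - algebraMap K A (φ₀ (e α.1) (e α.2.1) α.2.2) := by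
    intro α hα
    rw [haco]
    simp only [dif_pos hα]
    exact Classical.choose_spec (hδ α hα)
  set xco : A → Fin m × Fin m × Fin m → K := fun g α => pr (aco α g) with hxco
  set 𝒜f : Finset (Fin m × Fin m × Fin m) := (Set.toFinite 𝒜).toFinset with h𝒜f
  have h𝒜fmem : ∀ α, α ∈ 𝒜f ↔ α ∈ 𝒜 := fun α => (Set.toFinite 𝒜).mem_toFinset
  -- the correction endomorphisms
  have H : ∀ g : A, ∃ L : (Fin m → K) → (Fin m → K), IsLin K L ∧
      ∀ α ∈ 𝒜, cob φ₀ L (e α.1) (e α.2.1) α.2.2 = xco g α := by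
    intro g
    have hχb : IsBilin K (fun x y => ∑ β ∈ 𝒜f, xco g β • ekij β.1 β.2.1 β.2.2 x y) :=
      bilin_smulsum 𝒜f (xco g) _ (fun β _ => ekij_bilin β.1 β.2.1 β.2.2)
    have hχa : ∀ x : Fin m → K,
        (∑ β ∈ 𝒜f, xco g β • ekij β.1 β.2.1 β.2.2 x x) = (0 : Fin m → K) := by
      intro x
      simp only [ekij_alt, smul_zero]
      exact Finset.sum_const_zero
    obtain ⟨v, hv, L, hL, hLsum⟩ := hadm1 _ hχb hχa
    refine ⟨L, hL, fun α hα => ?_⟩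
    have hev : (∑ β ∈ 𝒜f, xco g β • ekij β.1 β.2.1 β.2.2 (e α.1) (e α.2.1)) α.2.2
        = xco g α := by
      rw [Finset.sum_apply]
      have hterm : ∀ β ∈ 𝒜f, (xco g β • ekij β.1 β.2.1 β.2.2 (e α.1) (e α.2.1)) α.2.2
          = if β = α then xco g β else 0 := by
        intro β hβ
        have hβ𝒜 : β ∈ 𝒜 := (h𝒜fmem β).1 hβ
        have heval := ekij_eval (K := K) β.1 β.2.1 β.2.2 α.1 α.2.1 α.2.2 (h𝒜 _ hα) (h𝒜 _ hβ𝒜)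
        rw [Pi.smul_apply, heval]
        by_cases hβα : β = α
        · subst hβα
          simp
        · have hne : ((β.1, β.2.1, β.2.2) : Fin m × Fin m × Fin m) ≠ (α.1, α.2.1, α.2.2) := by
            intro h1
            apply hβα
            rw [Prod.mk.injEq, Prod.mk.injEq] at h1
            exact Prod.ext h1.1 (Prod.ext h1.2.1 h1.2.2)
          rw [if_neg hne, if_neg hβα, smul_zero]
      rw [Finset.sum_congr rfl hterm, Finset.sum_ite_eq' 𝒜f α (xco g),
        if_pos ((h𝒜fmem α).2 hα)]
    have h2 : (∑ β ∈ 𝒜f, xco g β • ekij β.1 β.2.1 β.2.2 (e α.1) (e α.2.1)) α.2.2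
        = v (e α.1) (e α.2.1) α.2.2 + cob φ₀ L (e α.1) (e α.2.1) α.2.2 := by
      have h3 := congrFun (congrFun (congrFun hLsum (e α.1)) (e α.2.1)) α.2.2
      simpa using h3
    rw [h2, span_vanish 𝒜 h𝒜 v hv α.1 α.2.1 α.2.2 (by simpa using hα), zero_add] at hev
    exact hev
  choose Lf hLlin hLval using H
  -- the correction matrix
  refine ⟨fun k l => ∑ g ∈ F, g * algebraMap K A (Lf g (e l) k), ?_, ?_⟩
  · intro k l
    exact Submodule.sum_mem _ fun g hg => Ideal.mul_mem_right _ _ (hFJ g hg)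
  intro Tw hTS i j k hα
  set w : Fin m → Fin m → A := fun k l => ∑ g ∈ F, g * algebraMap K A (Lf g (e l) k) with hwdef
  have hw : ∀ k l, w k l ∈ (maximalIdeal A) ^ (n + 1) := by
    intro k l
    exact Submodule.sum_mem _ fun g hg => Ideal.mul_mem_right _ _ (hFJ g hg)
  obtain ⟨hTw1, hTw2⟩ := inv_approx ((maximalIdeal A) ^ (n + 2)) ((maximalIdeal A) ^ (n + 1))
    hJJ w hw Tw hTS
  have hsc := stepCore ((maximalIdeal A) ^ (n + 2)) ((maximalIdeal A) ^ (n + 1))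
    (maximalIdeal A) hJJ hJI hJM w Tw hw hTw2 c
    (fun i j k => algebraMap K A (φ₀ (e i) (e j) k)) hc1 i j k
  -- identify the first-order term with the coboundaries
  have swap : ∀ (t : A → Fin m → K) (d : Fin m → K),
      ∑ l : Fin m, (∑ g ∈ F, g * algebraMap K A (t g l)) * algebraMap K A (d l)
        = ∑ g ∈ F, g * algebraMap K A (∑ l : Fin m, t g l * d l) := by
    intro t d
    have h1 : ∀ l : Fin m, (∑ g ∈ F, g * algebraMap K A (t g l)) * algebraMap K A (d l)
        = ∑ g ∈ F, g * algebraMap K A (t g l * d l) := by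
      intro l
      rw [Finset.sum_mul]
      exact Finset.sum_congr rfl fun g _ => by rw [map_mul, mul_assoc]
    rw [Finset.sum_congr rfl fun l _ => h1 l, Finset.sum_comm]
    refine Finset.sum_congr rfl fun g _ => ?_
    rw [map_sum, Finset.mul_sum]
  have hB : (∑ l : Fin m, w k l * algebraMap K A (φ₀ (e i) (e j) l)
        - ∑ p : Fin m, w p i * algebraMap K A (φ₀ (e p) (e j) k)
        - ∑ q : Fin m, w q j * algebraMap K A (φ₀ (e i) (e q) k))
      = - ∑ g ∈ F, g * algebraMap K A (xco g (i, j, k)) := by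
    have e1 := swap (fun g l => Lf g (e l) k) (fun l => φ₀ (e i) (e j) l)
    have e2 := swap (fun g p => Lf g (e i) p) (fun p => φ₀ (e p) (e j) k)
    have e3 := swap (fun g q => Lf g (e j) q) (fun q => φ₀ (e i) (e q) k)
    rw [show (∑ l : Fin m, w k l * algebraMap K A (φ₀ (e i) (e j) l)) = _ from e1,
      show (∑ p : Fin m, w p i * algebraMap K A (φ₀ (e p) (e j) k)) = _ from e2,
      show (∑ q : Fin m, w q j * algebraMap K A (φ₀ (e i) (e q) k)) = _ from e3]
    rw [← Finset.sum_sub_distrib, ← Finset.sum_sub_distrib, ← Finset.sum_neg_distrib]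
    refine Finset.sum_congr rfl fun g hg => ?_
    rw [← hLval g (i, j, k) hα]
    rw [cob_const hbil halt (hLlin g) i j k]
    have hX : (∑ l : Fin m, Lf g (e l) k * φ₀ (e i) (e j) l)
        = ∑ l : Fin m, φ₀ (e i) (e j) l * Lf g (e l) k :=
      Finset.sum_congr rfl fun l _ => mul_comm _ _
    rw [hX, map_sub, map_add]
    ring
  have hfin : c i j k - algebraMap K A (φ₀ (e i) (e j) k)
      - ∑ g ∈ F, g * algebraMap K A (xco g (i, j, k)) ∈ (maximalIdeal A) ^ (n + 2) := by
    have hs := haco_spec (i, j, k) hα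
    rw [← hs, ← Finset.sum_sub_distrib]
    refine Submodule.sum_mem _ fun g hg => ?_
    have hrw : aco (i, j, k) g • g - g * algebraMap K A (xco g (i, j, k))
        = (aco (i, j, k) g - algebraMap K A (pr (aco (i, j, k) g))) * g := by
      rw [hxco]
      simp only [smul_eq_mul]
      ring
    rw [hrw]
    have hmem : aco (i, j, k) g - algebraMap K A (pr (aco (i, j, k) g)) ∈ maximalIdeal A := by
      rw [hpr, map_sub]
      simp
    have hprod := hJI _ (hFJ g hg) _ hmem
    rwa [mul_comm] at hprod
  rw [hB] at hsc
  have heq : (∑ l : Fin m, (idm k l + w k l) * ∑ p : Fin m, ∑ q : Fin m,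
        Tw p i * Tw q j * c p q l) - algebraMap K A (φ₀ (e i) (e j) k)
      = ((∑ l : Fin m, (idm k l + w k l) * ∑ p : Fin m, ∑ q : Fin m,
          Tw p i * Tw q j * c p q l)
        - (c i j k + -∑ g ∈ F, g * algebraMap K A (xco g (i, j, k))))
        + (c i j k - algebraMap K A (φ₀ (e i) (e j) k)
          - ∑ g ∈ F, g * algebraMap K A (xco g (i, j, k))) := by
    ring
  rw [heq]
  exact Submodule.add_mem _ hsc hfin

end Step
end Stmt4Aux
namespace Stmt4Aux
section Glue
variable {A : Type} [CommRing A] {m : ℕ}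

lemma smul_top_self (I : Ideal A) : (I • ⊤ : Submodule A A) = I := by
  simp [Ideal.smul_top_eq_map]

lemma const_congr (N : Ideal A) (S T S' T' : Fin m → Fin m → A)
    (c : Fin m → Fin m → Fin m → A)
    (hS : ∀ k l, S k l - S' k l ∈ N) (hT : ∀ k l, T k l - T' k l ∈ N) (i j k : Fin m) :
    (∑ l : Fin m, S k l * ∑ p : Fin m, ∑ q : Fin m, T p i * T q j * c p q l)
      - (∑ l : Fin m, S' k l * ∑ p : Fin m, ∑ q : Fin m, T' p i * T' q j * c p q l) ∈ N := by
  refine sub_sum_mem N _ fun l _ => ?_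
  refine sub_mul_mem N (hS k l) ?_
  refine sub_sum_mem N _ fun p _ => ?_
  refine sub_sum_mem N _ fun q _ => ?_
  exact sub_mul_mem N (sub_mul_mem N (hT p i) (hT q j)) (by simp)

lemma const_id (c : Fin m → Fin m → Fin m → A) (i j k : Fin m) :
    (∑ l : Fin m, idm k l * ∑ p : Fin m, ∑ q : Fin m, idm p i * idm q j * c p q l)
      = c i j k := by
  rw [sum_idm_mul k (fun l => ∑ p : Fin m, ∑ q : Fin m, idm p i * idm q j * c p q l)]
  have h1 : ∀ p, ∑ q : Fin m, idm p i * idm q j * c p q k = idm p i * c p j k := by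
    intro p
    have h2 : ∀ q, idm p i * idm q j * c p q k = idm q j * (idm p i * c p q k) := by
      intro q; ring
    rw [Finset.sum_congr rfl fun q _ => h2 q, sum_idm_mul' j (fun q => idm p i * c p q k)]
  rw [Finset.sum_congr rfl fun p _ => h1 p, sum_idm_mul' i (fun p => c p j k)]

lemma matMap_eq (S : Matrix (Fin m) (Fin m) A) (x : Fin m → A) :
    matMap (fun k l => S k l - idm k l) x = S.mulVec x := by
  funext k
  show x k + ∑ j : Fin m, (S k j - idm k j) * x j = ∑ j : Fin m, S k j * x j
  rw [Finset.sum_congr rfl fun j _ => sub_mul (S k j) (idm k j) (x j),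
    Finset.sum_sub_distrib, sum_idm_mul k x]
  ring

lemma one_add_of_apply (w : Fin m → Fin m → A) (k l : Fin m) :
    (1 + Matrix.of w) k l = idm k l + w k l := by
  show (1 : Matrix (Fin m) (Fin m) A) k l + Matrix.of w k l = _
  rw [Matrix.one_apply, Matrix.of_apply]
  rfl

end Glue
end Stmt4Aux

open Stmt4Aux

/-- For `𝒜` admissible at `φ₀` and `A` a Noetherian complete local
`K`-algebra with residue field `K`, every deformation `φ'` of `φ₀` with base `A` is
equivalent under `G_m(A) = {id + w : w ∈ End⊗𝔪}` to a deformation `ψ = s*φ'` whose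
coordinates indexed by `𝒜` equal those of `φ₀`.  (`ψ = s*φ' = s∘φ'∘(s⁻¹×s⁻¹)` is
expressed in the inverse-free form `ψ(sx,sy) = s(φ'(x,y))`, with `s` bijective.) -/
theorem stmt_4 {K : Type} [Field K] [CharZero K] [IsAlgClosed K] {m : ℕ}
    (φ₀ : (Fin m → K) → (Fin m → K) → (Fin m → K))
    (hbil : IsBilin K φ₀) (halt : ∀ x, φ₀ x x = 0)
    (hjac : ∀ x y z, φ₀ (φ₀ x y) z + φ₀ (φ₀ y z) x + φ₀ (φ₀ z x) y = 0)
    -- the admissible set 𝒜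
    (𝒜 : Set (Fin m × Fin m × Fin m))
    (h𝒜 : ∀ α ∈ 𝒜, α.1 < α.2.1)
    (hadm1 : ∀ ψ : (Fin m → K) → (Fin m → K) → (Fin m → K),
      IsBilin K ψ → (∀ x, ψ x x = 0) →
      ∃ v ∈ Submodule.span K {f | ∃ i j k : Fin m, i < j ∧ (i, j, k) ∉ 𝒜 ∧ f = ekij i j k},
        ∃ L, IsLin K L ∧ ψ = v + cob φ₀ L)
    (hadm2 : ∀ v ∈ Submodule.span K
        {f | ∃ i j k : Fin m, i < j ∧ (i, j, k) ∉ 𝒜 ∧ f = ekij (K := K) i j k},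
      ∀ L, IsLin K L → v = cob φ₀ L → v = 0)
    -- `A`: a Noetherian complete local `K`-algebra with residue field `K`
    (A : Type) [CommRing A] [Algebra K A] [IsLocalRing A] [IsNoetherianRing A]
    (hcomplete : IsAdicComplete (IsLocalRing.maximalIdeal A) A)
    (pr : A →ₐ[K] K)
    (hpr : ∀ a : A, a ∈ IsLocalRing.maximalIdeal A ↔ pr a = 0) :
    -- conclusion
    ∀ φ' : (Fin m → A) → (Fin m → A) → (Fin m → A),
      IsBilin A φ' → (∀ x, φ' x x = 0) →
      (∀ x y z, φ' (φ' x y) z + φ' (φ' y z) x + φ' (φ' z x) y = 0) →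
      (∀ i j k : Fin m, pr (φ' (Pi.single i 1) (Pi.single j 1) k)
        = φ₀ (Pi.single i 1) (Pi.single j 1) k) →
      ∃ W : Fin m → Fin m → A,
        (∀ i j, W i j ∈ IsLocalRing.maximalIdeal A) ∧
        Function.Bijective (matMap W) ∧
        ∃ ψ : (Fin m → A) → (Fin m → A) → (Fin m → A),
          (∀ x y, ψ (matMap W x) (matMap W y) = matMap W (φ' x y)) ∧
          ∀ α ∈ 𝒜, ψ (Pi.single α.1 1) (Pi.single α.2.1 1) α.2.2
            = algebraMap K A (φ₀ (Pi.single α.1 1) (Pi.single α.2.1 1) α.2.2) := by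
  intro φ' hb' ha' hj' hres
  classical
  -- residue congruence of the structure constants of φ'
  have hc'1 : ∀ i j k : Fin m, φ' (e i) (e j) k - algebraMap K A (φ₀ (e i) (e j) k)
      ∈ IsLocalRing.maximalIdeal A := by
    intro i j k
    rw [hpr, map_sub]
    rw [show pr (algebraMap K A (φ₀ (e i) (e j) k)) = φ₀ (e i) (e j) k by
      rw [AlgHom.commutes]; simp]
    rw [show pr (φ' (e i) (e j) k) = φ₀ (e i) (e j) k from hres i j k]
    ring
  -- the invariant
  set Mi := IsLocalRing.maximalIdeal A with hMidef
  set P : ℕ → Matrix (Fin m) (Fin m) A → Matrix (Fin m) (Fin m) A → Prop := fun n S T =>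
    S * T = 1 ∧ T * S = 1 ∧ (∀ k l, S k l - idm k l ∈ Mi) ∧ (∀ k l, T k l - idm k l ∈ Mi) ∧
    (∀ i j k : Fin m, (i, j, k) ∈ 𝒜 →
      conj S T φ' (e i) (e j) k - algebraMap K A (φ₀ (e i) (e j) k) ∈ Mi ^ (n + 1))
    with hPdef
  -- all-coordinates congruence mod Mi at every stage
  have hstage1 : ∀ S T : Matrix (Fin m) (Fin m) A,
      (∀ k l, S k l - idm k l ∈ Mi) → (∀ k l, T k l - idm k l ∈ Mi) →
      ∀ i j k : Fin m,
        conj S T φ' (e i) (e j) k - algebraMap K A (φ₀ (e i) (e j) k) ∈ Mi := by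
    intro S T hS hT i j k
    have h1 := const_congr Mi (fun k l => S k l) (fun k l => T k l) idm idm
      (fun i j k => φ' (e i) (e j) k) hS hT i j k
    rw [const_id] at h1
    have h2 : conj S T φ' (e i) (e j) k
        = ∑ l : Fin m, S k l * ∑ p : Fin m, ∑ q : Fin m, T p i * T q j * φ' (e p) (e q) l :=
      conj_const hb' i j k
    have heq : conj S T φ' (e i) (e j) k - algebraMap K A (φ₀ (e i) (e j) k)
        = ((∑ l : Fin m, S k l * ∑ p : Fin m, ∑ q : Fin m, T p i * T q j * φ' (e p) (e q) l)
            - φ' (e i) (e j) k)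
          + (φ' (e i) (e j) k - algebraMap K A (φ₀ (e i) (e j) k)) := by
      rw [h2]; ring
    rw [heq]
    exact Mi.add_mem h1 (hc'1 i j k)
  -- the inductive step
  have step : ∀ n : ℕ, ∀ S T : Matrix (Fin m) (Fin m) A, P n S T →
      ∃ S' T' : Matrix (Fin m) (Fin m) A, P (n + 1) S' T' ∧
        (∀ k l, S' k l - S k l ∈ Mi ^ (n + 1)) ∧
        (∀ k l, T' k l - T k l ∈ Mi ^ (n + 1)) := by
    intro n S T hP
    obtain ⟨hST, hTS, hS1, hT1, hα⟩ := hP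
    -- apply the step lemma to the constants of conj S T φ'
    obtain ⟨w, hw, hwstep⟩ := step_exists φ₀ hbil halt 𝒜 h𝒜 hadm1 pr hpr n
      (fun i j k => conj S T φ' (e i) (e j) k)
      (hstage1 S T hS1 hT1) hα
    have hwMi : ∀ k l, (1 + Matrix.of w) k l - idm k l ∈ Mi := by
      intro k l
      rw [one_add_of_apply]
      have : idm k l + w k l - idm k l = w k l := by ring
      rw [this]
      exact Ideal.pow_le_self (Nat.succ_ne_zero n) (hw k l)
    obtain ⟨Tw, hSTw, hTwS⟩ := exists_inverse pr hpr (1 + Matrix.of w) hwMi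
    refine ⟨(1 + Matrix.of w) * S, T * Tw, ⟨?_, ?_, ?_, ?_, ?_⟩, ?_, ?_⟩
    · rw [mul_assoc, ← mul_assoc S T, hST, one_mul, hSTw]
    · rw [mul_assoc, ← mul_assoc Tw, hTwS, one_mul, hTS]
    · intro k l
      have h1 : ((1 + Matrix.of w) * S) k l = S k l + ∑ a : Fin m, w k a * S a l := by
        rw [Matrix.mul_apply]
        rw [Finset.sum_congr rfl fun a _ => by rw [one_add_of_apply, add_mul]]
        rw [Finset.sum_add_distrib, sum_idm_mul k (fun a => S a l)]
      rw [h1]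
      have heq : S k l + (∑ a : Fin m, w k a * S a l) - idm k l
          = (S k l - idm k l) + ∑ a : Fin m, w k a * S a l := by ring
      rw [heq]
      refine Mi.add_mem (hS1 k l) (Submodule.sum_mem _ fun a _ => ?_)
      exact Mi.mul_mem_right _ (Ideal.pow_le_self (Nat.succ_ne_zero n) (hw k a))
    · intro k l
      rw [Matrix.mul_apply]
      have hTw1 : ∀ a b, Tw a b - idm a b ∈ Mi := by
        intro a b
        have h2 := (inv_approx (Mi ^ (n + 2)) (Mi ^ (n + 1))
          (fun a ha b hb => by
            have h3 : a * b ∈ Mi ^ (n + 1) * Mi ^ (n + 1) := Ideal.mul_mem_mul ha hb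
            rw [← pow_add] at h3
            exact Ideal.pow_le_pow_right (by omega) h3) w hw Tw hTwS).1 a b
        exact Ideal.pow_le_self (Nat.succ_ne_zero n) h2
      have h4 : ∑ a : Fin m, T k a * Tw a l - idm k l
          = ∑ a : Fin m, T k a * Tw a l - ∑ a : Fin m, idm k a * idm a l := by
        rw [sum_idm_mul k (fun a => idm a l)]
      rw [h4]
      exact sub_sum_mem Mi _ fun a _ => sub_mul_mem Mi (hT1 k a) (hTw1 a l)
    · -- the key coordinate improvement
      intro i j k hijk
      have hcomp : conj ((1 + Matrix.of w) * S) (T * Tw) φ' = conj (1 + Matrix.of w) Tw (conj S T φ') := by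
        rw [conj_conj]
      rw [hcomp]
      have hexp : conj (1 + Matrix.of w) Tw (conj S T φ') (e i) (e j) k
          = ∑ l : Fin m, (idm k l + w k l) * ∑ p : Fin m, ∑ q : Fin m,
              Tw p i * Tw q j * conj S T φ' (e p) (e q) l := by
        rw [conj_const (conj_bilin hb') i j k]
        exact Finset.sum_congr rfl fun l _ => by rw [one_add_of_apply]
      rw [hexp]
      exact hwstep Tw hTwS i j k hijk
    · intro k l
      have h1 : ((1 + Matrix.of w) * S) k l = S k l + ∑ a : Fin m, w k a * S a l := by
        rw [Matrix.mul_apply]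
        rw [Finset.sum_congr rfl fun a _ => by rw [one_add_of_apply, add_mul]]
        rw [Finset.sum_add_distrib, sum_idm_mul k (fun a => S a l)]
      rw [h1]
      have heq : S k l + (∑ a : Fin m, w k a * S a l) - S k l
          = ∑ a : Fin m, w k a * S a l := by ring
      rw [heq]
      exact Submodule.sum_mem _ fun a _ => Ideal.mul_mem_right _ _ (hw k a)
    · intro k l
      have hTw1 : ∀ a b, Tw a b - idm a b ∈ Mi ^ (n + 1) :=
        (inv_approx (Mi ^ (n + 2)) (Mi ^ (n + 1))
          (fun a ha b hb => by
            have h3 : a * b ∈ Mi ^ (n + 1) * Mi ^ (n + 1) := Ideal.mul_mem_mul ha hb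
            rw [← pow_add] at h3
            exact Ideal.pow_le_pow_right (by omega) h3) w hw Tw hTwS).1
      have h1 : (T * Tw) k l - T k l = ∑ a : Fin m, T k a * (Tw a l - idm a l) := by
        rw [Matrix.mul_apply]
        rw [Finset.sum_congr rfl fun a _ => mul_sub (T k a) (Tw a l) (idm a l)]
        rw [Finset.sum_sub_distrib]
        have h2 : ∑ a : Fin m, T k a * idm a l = T k l := by
          rw [Finset.sum_congr rfl fun a _ => mul_comm (T k a) (idm a l)]
          exact sum_idm_mul' l (fun a => T k a)
        rw [h2]
      rw [h1]
      exact Submodule.sum_mem _ fun a _ => Ideal.mul_mem_left _ _ (hTw1 a l)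
  -- base case
  have base : P 0 1 1 := by
    refine ⟨one_mul 1, one_mul 1, ?_, ?_, ?_⟩
    · intro k l
      have h1 : (1 : Matrix (Fin m) (Fin m) A) k l = idm k l := by
        rw [Matrix.one_apply]; rfl
      rw [h1, sub_self]
      exact Mi.zero_mem
    · intro k l
      have h1 : (1 : Matrix (Fin m) (Fin m) A) k l = idm k l := by
        rw [Matrix.one_apply]; rfl
      rw [h1, sub_self]
      exact Mi.zero_mem
    · intro i j k hijk
      rw [conj_one, pow_one]
      exact hc'1 i j k
  choose S' T' hP' hdS hdT using step
  let seq : ∀ n : ℕ, {p : Matrix (Fin m) (Fin m) A × Matrix (Fin m) (Fin m) A // P n p.1 p.2} :=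
    fun n => Nat.rec ⟨(1, 1), base⟩
      (fun n q => ⟨(S' n q.1.1 q.1.2 q.2, T' n q.1.1 q.1.2 q.2), hP' n q.1.1 q.1.2 q.2⟩) n
  have hdiffS : ∀ n k l, (seq (n + 1)).1.1 k l - (seq n).1.1 k l ∈ Mi ^ (n + 1) :=
    fun n => hdS n (seq n).1.1 (seq n).1.2 (seq n).2
  have hdiffT : ∀ n k l, (seq (n + 1)).1.2 k l - (seq n).1.2 k l ∈ Mi ^ (n + 1) :=
    fun n => hdT n (seq n).1.1 (seq n).1.2 (seq n).2
  have hcauchyS : ∀ a b : ℕ, a ≤ b → ∀ k l, (seq a).1.1 k l - (seq b).1.1 k l ∈ Mi ^ a := by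
    intro a b hab
    induction b, hab using Nat.le_induction with
    | base => intro k l; rw [sub_self]; exact Submodule.zero_mem _
    | succ b hab ih =>
      intro k l
      have h2 := hdiffS b k l
      have heq : (seq a).1.1 k l - (seq (b + 1)).1.1 k l
          = ((seq a).1.1 k l - (seq b).1.1 k l)
            - ((seq (b + 1)).1.1 k l - (seq b).1.1 k l) := by ring
      rw [heq]
      exact Submodule.sub_mem _ (ih k l) (Ideal.pow_le_pow_right (by omega) h2)
  have hcauchyT : ∀ a b : ℕ, a ≤ b → ∀ k l, (seq a).1.2 k l - (seq b).1.2 k l ∈ Mi ^ a := by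
    intro a b hab
    induction b, hab using Nat.le_induction with
    | base => intro k l; rw [sub_self]; exact Submodule.zero_mem _
    | succ b hab ih =>
      intro k l
      have h2 := hdiffT b k l
      have heq : (seq a).1.2 k l - (seq (b + 1)).1.2 k l
          = ((seq a).1.2 k l - (seq b).1.2 k l)
            - ((seq (b + 1)).1.2 k l - (seq b).1.2 k l) := by ring
      rw [heq]
      exact Submodule.sub_mem _ (ih k l) (Ideal.pow_le_pow_right (by omega) h2)
  -- the limit
  have hpre : ∀ k l : Fin m, ∃ Lv : A, ∀ n,
      (seq n).1.1 k l ≡ Lv [SMOD Mi ^ n • (⊤ : Submodule A A)] := by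
    intro k l
    refine IsPrecomplete.prec hcomplete.toIsPrecomplete ?_
    intro a b hab
    rw [SModEq.sub_mem, smul_top_self]
    exact hcauchyS a b hab k l
  choose Slo hSlo using hpre
  have hSlim : ∀ n k l, (Matrix.of Slo) k l - (seq n).1.1 k l ∈ Mi ^ n := by
    intro n k l
    have h1 := hSlo k l n
    rw [SModEq.sub_mem, smul_top_self] at h1
    rw [← neg_sub]
    exact Submodule.neg_mem _ h1
  have hSlim1 : ∀ k l, (Matrix.of Slo) k l - idm k l ∈ Mi := by
    intro k l
    have h1 := hSlim 1 k l
    have h2 := (seq 1).2.2.2.1 k l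
    have heq : (Matrix.of Slo) k l - idm k l
        = ((Matrix.of Slo) k l - (seq 1).1.1 k l) + ((seq 1).1.1 k l - idm k l) := by ring
    rw [heq]
    rw [pow_one] at h1
    exact Mi.add_mem h1 h2
  obtain ⟨Tlim, hSTl, hTSl⟩ := exists_inverse pr hpr (Matrix.of Slo) hSlim1
  have hTn : ∀ n k l, Tlim k l - (seq n).1.2 k l ∈ Mi ^ n := by
    intro n
    exact inv_entries_congr (Mi ^ n) (Matrix.of Slo) Tlim (seq n).1.1 (seq n).1.2
      hSTl hTSl (seq n).2.1 (fun k l => hSlim n k l)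
  -- conclusion
  have hmmeq : matMap (fun k l => (Matrix.of Slo) k l - idm k l) = (Matrix.of Slo).mulVec :=
    funext (matMap_eq (Matrix.of Slo))
  refine ⟨fun k l => (Matrix.of Slo) k l - idm k l, hSlim1, ?_, conj (Matrix.of Slo) Tlim φ', ?_, ?_⟩
  · rw [hmmeq]
    refine Function.bijective_iff_has_inverse.mpr ⟨Tlim.mulVec, fun x => ?_, fun x => ?_⟩
    · rw [Matrix.mulVec_mulVec, hTSl, Matrix.one_mulVec]
    · rw [Matrix.mulVec_mulVec, hSTl, Matrix.one_mulVec]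
  · intro x y
    rw [hmmeq]
    show (Matrix.of Slo).mulVec (φ' (Tlim.mulVec ((Matrix.of Slo).mulVec x))
        (Tlim.mulVec ((Matrix.of Slo).mulVec y))) = _
    rw [Matrix.mulVec_mulVec, Matrix.mulVec_mulVec, hTSl, Matrix.one_mulVec, Matrix.one_mulVec]
  · intro α hα
    have hD : ∀ n : ℕ, conj (Matrix.of Slo) Tlim φ' (e α.1) (e α.2.1) α.2.2
        - algebraMap K A (φ₀ (e α.1) (e α.2.1) α.2.2) ∈ Mi ^ n := by
      intro n
      have h1 : conj (Matrix.of Slo) Tlim φ' (e α.1) (e α.2.1) α.2.2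
          - conj (seq n).1.1 (seq n).1.2 φ' (e α.1) (e α.2.1) α.2.2 ∈ Mi ^ n := by
        rw [conj_const hb', conj_const hb']
        exact const_congr (Mi ^ n) (fun k l => (Matrix.of Slo) k l) (fun k l => Tlim k l)
          (fun k l => (seq n).1.1 k l) (fun k l => (seq n).1.2 k l)
          (fun i j k => φ' (e i) (e j) k) (fun k l => hSlim n k l) (fun k l => hTn n k l)
          α.1 α.2.1 α.2.2
      have h2 := (seq n).2.2.2.2.2 α.1 α.2.1 α.2.2 (by simpa using hα)
      have heq : conj (Matrix.of Slo) Tlim φ' (e α.1) (e α.2.1) α.2.2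
          - algebraMap K A (φ₀ (e α.1) (e α.2.1) α.2.2)
          = (conj (Matrix.of Slo) Tlim φ' (e α.1) (e α.2.1) α.2.2
              - conj (seq n).1.1 (seq n).1.2 φ' (e α.1) (e α.2.1) α.2.2)
            + (conj (seq n).1.1 (seq n).1.2 φ' (e α.1) (e α.2.1) α.2.2
              - algebraMap K A (φ₀ (e α.1) (e α.2.1) α.2.2)) := by ring
      rw [heq]
      exact Submodule.add_mem _ h1 (Ideal.pow_le_pow_right (by omega) h2)
    have hzero : conj (Matrix.of Slo) Tlim φ' (e α.1) (e α.2.1) α.2.2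
        - algebraMap K A (φ₀ (e α.1) (e α.2.1) α.2.2) = 0 := by
      refine IsHausdorff.haus hcomplete.toIsHausdorff _ fun n => ?_
      rw [SModEq.sub_mem, sub_zero, smul_top_self]
      exact hD n
    have := sub_eq_zero.mp hzero
    exact this


end Stmt4
end

section
/- Let K be an algebraically closed field of characteristic 0, m = n + r, and φ₀ a Lie bracket on K^m with standard basis e₁,…,e_m such that N := span(e₁,…,e_n) is an ideal and R := span(e_{n+1},…,e_m) is a Lie subalgebra; for 1 ≤ l ≤ r define δ_l ∈ End_K(K^n) by δ_l(x) = φ₀(e_{n+l}, x) for x ∈ N. Then for every commutative K-algebra A, the map sending φ to its restriction to (A⊗N)×(A⊗N) is a bijection from the set of alternating A-bilinear brackets φ on A⊗K^m satisfying the Jacobi identity such that φ(e_i,e_j) = φ₀(e_i,e_j) (image in A⊗K^m) whenever i > n or j > n, and φ(e_i,e_j) ∈ A⊗N whenever i, j ≤ n, onto the set of alternating A-bilinear brackets ψ on A⊗K^n satisfying the Jacobi identity for which every δ_l (extended A-linearly) is a derivation of ψ. -/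
section Stmt9

variable {K : Type} [Field K] {A : Type} [CommRing A] [Algebra K A] {m n : ℕ}

/-- Extension by zero `A^n → A^m` (first `n` coordinates), `n ≤ m`. -/
def inclFun (A : Type) [CommRing A] (m n : ℕ) (w : Fin n → A) : Fin m → A :=
  fun k => if h : (k : ℕ) < n then w ⟨k, h⟩ else 0

/-- Restriction `A^m → A^n` to the first `n` coordinates. -/
def restFun (A : Type) [CommRing A] {m : ℕ} (n : ℕ) (hnm : n ≤ m) (v : Fin m → A) :
    Fin n → A :=
  fun i => v (Fin.castLE hnm i)

namespace Stmt9Aux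

variable {A : Type} [CommRing A]

/-- Raw linearity of a map between function modules. -/
def RawLin {p q : ℕ} (f : (Fin p → A) → (Fin q → A)) : Prop :=
  ∀ (a : A) (x x' : Fin p → A), f (a • x + x') = a • f x + f x'

theorem RawLin.zero {p q : ℕ} {f : (Fin p → A) → (Fin q → A)} (hf : RawLin f) : f 0 = 0 := by
  have h : f 0 = f 0 + f 0 := by simpa using hf 1 0 0
  exact (left_eq_add.mp h)

theorem RawLin.add {p q : ℕ} {f : (Fin p → A) → (Fin q → A)} (hf : RawLin f)
    (x x' : Fin p → A) : f (x + x') = f x + f x' := by simpa using hf 1 x x'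

theorem RawLin.smul {p q : ℕ} {f : (Fin p → A) → (Fin q → A)} (hf : RawLin f) (a : A)
    (x : Fin p → A) : f (a • x) = a • f x := by simpa [hf.zero] using hf a x 0

theorem RawLin.neg {p q : ℕ} {f : (Fin p → A) → (Fin q → A)} (hf : RawLin f) (x : Fin p → A) :
    f (-x) = - f x := by
  have := hf.smul (-1) x
  simpa [neg_one_smul] using this

theorem RawLin.sum {p q : ℕ} {f : (Fin p → A) → (Fin q → A)} (hf : RawLin f) {ι : Type}
    (s : Finset ι) (g : ι → (Fin p → A)) : f (∑ i ∈ s, g i) = ∑ i ∈ s, f (g i) := by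
  classical
  induction s using Finset.induction_on with
  | empty => simpa using hf.zero
  | insert _ _ hns ih =>
    rw [Finset.sum_insert hns, hf.add, ih, Finset.sum_insert hns]

theorem pi_expand {p : ℕ} (x : Fin p → A) :
    x = ∑ i, (x i) • (Pi.single i 1 : Fin p → A) := by
  have h := Finset.univ_sum_single x
  rw [← h]
  refine Finset.sum_congr rfl fun i _ => ?_
  funext j
  simp [Pi.single_apply, mul_comm]

theorem RawLin.expand {p q : ℕ} {f : (Fin p → A) → (Fin q → A)} (hf : RawLin f)
    (x : Fin p → A) : f x = ∑ i, (x i) • f (Pi.single i 1) := by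
  conv_lhs => rw [pi_expand x, hf.sum]
  refine Finset.sum_congr rfl fun i _ => hf.smul _ _

theorem isBilin_left {q : ℕ} {f : (Fin q → A) → (Fin q → A) → (Fin q → A)} (hf : IsBilin A f)
    (y : Fin q → A) : RawLin (fun x => f x y) := fun a x x' => hf.1 a x x' y

theorem isBilin_right {q : ℕ} {f : (Fin q → A) → (Fin q → A) → (Fin q → A)} (hf : IsBilin A f)
    (x : Fin q → A) : RawLin (fun y => f x y) := fun a y y' => hf.2 a x y y'

theorem bilin_expand {q : ℕ} {f : (Fin q → A) → (Fin q → A) → (Fin q → A)} (hf : IsBilin A f)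
    (x y : Fin q → A) :
    f x y = ∑ i, ∑ j, (x i * y j) • f (Pi.single i 1) (Pi.single j 1) := by
  rw [(isBilin_left hf y).expand x]
  refine Finset.sum_congr rfl fun i _ => ?_
  rw [(isBilin_right hf (Pi.single i 1)).expand y, Finset.smul_sum]
  refine Finset.sum_congr rfl fun j _ => ?_
  rw [smul_smul]

theorem bilin_ext {q : ℕ} {f g : (Fin q → A) → (Fin q → A) → (Fin q → A)} (hf : IsBilin A f)
    (hg : IsBilin A g)
    (h : ∀ i j : Fin q, f (Pi.single i 1) (Pi.single j 1) = g (Pi.single i 1) (Pi.single j 1)) :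
    f = g := by
  funext x y
  rw [bilin_expand hf, bilin_expand hg]
  exact Finset.sum_congr rfl fun i _ => Finset.sum_congr rfl fun j _ => by rw [h]

theorem bilin_antisym {q : ℕ} {f : (Fin q → A) → (Fin q → A) → (Fin q → A)} (hf : IsBilin A f)
    (halt : ∀ x, f x x = 0) (x y : Fin q → A) : f x y + f y x = 0 := by
  have h := halt (x + y)
  rw [(isBilin_left hf (x+y)).add, (isBilin_right hf x).add, (isBilin_right hf y).add,
    halt x, halt y] at h
  simpa using h

theorem bilin_alt_of_basis {q : ℕ} {f : (Fin q → A) → (Fin q → A) → (Fin q → A)}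
    (hf : IsBilin A f)
    (h : ∀ i j : Fin q, f (Pi.single i 1) (Pi.single j 1) + f (Pi.single j 1) (Pi.single i 1) = 0)
    (hd : ∀ i : Fin q, f (Pi.single i 1) (Pi.single i 1) = 0) (x : Fin q → A) : f x x = 0 := by
  classical
  rw [bilin_expand hf, ← Finset.sum_product']
  refine Finset.sum_involution (fun pr _ => Prod.swap pr) ?_ ?_ (fun _ _ => Finset.mem_univ _) ?_
  · intro a _
    have : (x a.1 * x a.2) = (x a.2 * x a.1) := mul_comm _ _
    simp only [Prod.swap]
    rw [this, ← smul_add]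
    rw [h a.1 a.2]
    simp
  · intro a _ hne heq
    apply hne
    have h1 : a.2 = a.1 := congrArg Prod.fst heq
    rw [h1, hd]
    simp
  · intro a _; rfl

/-- Jacobi identity reduction to basis vectors. -/
theorem jacobi_of_basis {q : ℕ} {f : (Fin q → A) → (Fin q → A) → (Fin q → A)}
    (hf : IsBilin A f)
    (h : ∀ i j k : Fin q,
      f (f (Pi.single i 1) (Pi.single j 1)) (Pi.single k 1)
        + f (f (Pi.single j 1) (Pi.single k 1)) (Pi.single i 1)
        + f (f (Pi.single k 1) (Pi.single i 1)) (Pi.single j 1) = 0)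
    (x y z : Fin q → A) : f (f x y) z + f (f y z) x + f (f z x) y = 0 := by
  classical
  set J : (Fin q → A) → (Fin q → A) → (Fin q → A) → (Fin q → A) :=
    fun x y z => f (f x y) z + f (f y z) x + f (f z x) y with hJ
  have hx : ∀ y z, RawLin (fun x => J x y z) := by
    intro y z a u u'
    simp only [hJ]
    rw [hf.1 a u u' y, hf.1, hf.2 a (f y z) u u', hf.2 a z u u', hf.1]
    funext k
    simp only [Pi.add_apply, Pi.smul_apply, smul_eq_mul]
    ring
  have hy : ∀ x z, RawLin (fun y => J x y z) := by
    intro x z a u u'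
    simp only [hJ]
    rw [hf.2 a x u u', hf.1, hf.1 a u u' z, hf.1, hf.2 a (f z x) u u']
    funext k
    simp only [Pi.add_apply, Pi.smul_apply, smul_eq_mul]
    ring
  have hz : ∀ x y, RawLin (fun z => J x y z) := by
    intro x y a u u'
    simp only [hJ]
    rw [hf.2 a (f x y) u u', hf.2 a y u u', hf.1, hf.1 a u u' x, hf.1]
    funext k
    simp only [Pi.add_apply, Pi.smul_apply, smul_eq_mul]
    ring
  have : J x y z = 0 := by
    rw [(hx y z).expand x]
    refine Finset.sum_eq_zero fun i _ => ?_
    rw [(hy (Pi.single i 1) z).expand y]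
    rw [Finset.sum_eq_zero, smul_zero]
    intro j _
    rw [(hz (Pi.single i 1) (Pi.single j 1)).expand z]
    rw [Finset.sum_eq_zero, smul_zero]
    intro k _
    simp only [hJ]
    rw [h i j k, smul_zero]
  simpa [hJ] using this


theorem jacobi_deriv {q : ℕ} {f : (Fin q → A) → (Fin q → A) → (Fin q → A)} (hf : IsBilin A f)
    (halt : ∀ x, f x x = 0)
    (hj : ∀ x y z, f (f x y) z + f (f y z) x + f (f z x) y = 0) (a u v : Fin q → A) :
    f a (f u v) = f (f a u) v + f u (f a v) := by
  have anti : ∀ x y, f x y + f y x = 0 := bilin_antisym hf halt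
  have e2 : f (f v a) u = f u (f a v) := by
    have h3 : f v a = -(f a v) := eq_neg_of_add_eq_zero_left (anti _ _)
    rw [h3, (isBilin_left hf u).neg]
    linear_combination - anti (f a v) u
  have h1 := hj u v a
  rw [e2] at h1
  linear_combination anti (f u v) a - h1

variable {m n : ℕ}

theorem incl_rawlin : RawLin (inclFun A m n) := by
  intro a x x'
  funext k
  by_cases h : (k : ℕ) < n <;> simp [inclFun, h]

theorem rest_rawlin (hnm : n ≤ m) : RawLin (restFun A n hnm) := by
  intro a x x'
  funext i
  simp [restFun]

theorem rest_incl (hnm : n ≤ m) (w : Fin n → A) :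
    restFun A n hnm (inclFun A m n w) = w := by
  funext i
  simp [restFun, inclFun, i.isLt]

theorem incl_single (hnm : n ≤ m) (j : Fin n) (c : A) :
    inclFun A m n (Pi.single j c) = Pi.single (Fin.castLE hnm j) c := by
  funext k
  by_cases h : (k : ℕ) < n
  · simp only [inclFun, dif_pos h, Pi.single_apply]
    have : ((⟨(k : ℕ), h⟩ : Fin n) = j) ↔ (k = Fin.castLE hnm j) := by
      constructor <;> intro hh <;> exact Fin.ext (by simpa [Fin.ext_iff] using hh)
    rw [if_congr this rfl rfl]
  · have : k ≠ Fin.castLE hnm j := by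
      intro hk
      exact h (by simp [hk, j.isLt])
    simp [inclFun, h, Pi.single_apply, this]

theorem incl_apply_ge (w : Fin n → A) (k : Fin m) (hk : n ≤ (k : ℕ)) :
    inclFun A m n w k = 0 := by
  simp [inclFun, Nat.not_lt.mpr hk]

theorem incl_apply_lt (w : Fin n → A) (k : Fin m) (hk : (k : ℕ) < n) :
    inclFun A m n w k = w ⟨k, hk⟩ := by
  simp [inclFun, hk]

theorem incl_rest_of (hnm : n ≤ m) (v : Fin m → A)
    (h : ∀ k : Fin m, n ≤ (k : ℕ) → v k = 0) :
    inclFun A m n (restFun A n hnm v) = v := by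
  funext k
  by_cases hk : (k : ℕ) < n
  · rw [incl_apply_lt _ _ hk]
    exact congrArg v (Fin.ext rfl)
  · rw [incl_apply_ge _ _ (Nat.le_of_not_lt hk), h k (Nat.le_of_not_lt hk)]


theorem rest_apply (hnm : n ≤ m) (v : Fin m → A) (i : Fin n) :
    restFun A n hnm v i = v (Fin.castLE hnm i) := rfl

theorem incl_castAdd {r : ℕ} (w : Fin n → A) (j : Fin n) :
    inclFun A (n+r) n w (Fin.castAdd r j) = w j := by
  rw [incl_apply_lt _ _ (by simpa using j.isLt)]
  exact congrArg w (Fin.ext rfl)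

theorem bilin_expand_left {q : ℕ} {f : (Fin q → A) → (Fin q → A) → (Fin q → A)}
    (hf : IsBilin A f) (v y : Fin q → A) :
    f v y = ∑ i, (v i) • f (Pi.single i 1) y := (isBilin_left hf y).expand v

theorem bilin_expand_right {q : ℕ} {f : (Fin q → A) → (Fin q → A) → (Fin q → A)}
    (hf : IsBilin A f) (x v : Fin q → A) :
    f x v = ∑ j, (v j) • f x (Pi.single j 1) := (isBilin_right hf x).expand v

theorem bilin_neg_left {q : ℕ} {f : (Fin q → A) → (Fin q → A) → (Fin q → A)}
    (hf : IsBilin A f) (x y : Fin q → A) : f (-x) y = -(f x y) := (isBilin_left hf y).neg x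

theorem bilin_neg_right {q : ℕ} {f : (Fin q → A) → (Fin q → A) → (Fin q → A)}
    (hf : IsBilin A f) (x y : Fin q → A) : f x (-y) = -(f x y) := (isBilin_right hf x).neg y

variable {K : Type} [Field K] [Algebra K A]

/-- Componentwise base change. -/
def algA (K : Type) [Field K] (A : Type) [CommRing A] [Algebra K A] {q : ℕ}
    (u : Fin q → K) : Fin q → A := fun k => algebraMap K A (u k)


theorem algA_apply {q : ℕ} (u : Fin q → K) (k : Fin q) :
    algA K A u k = algebraMap K A (u k) := rfl

theorem algA_add {q : ℕ} (u v : Fin q → K) : algA K A (u + v) = algA K A u + algA K A v := by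
  funext k; simp [algA]

theorem algA_zero {q : ℕ} : algA K A (0 : Fin q → K) = 0 := by
  funext k; simp [algA]

theorem algA_neg {q : ℕ} (u : Fin q → K) : algA K A (-u) = - algA K A u := by
  funext k; simp [algA]

theorem algA_smul {q : ℕ} (c : K) (u : Fin q → K) :
    algA K A (c • u) = algebraMap K A c • algA K A u := by
  funext k; simp [algA]

theorem algA_sum {q : ℕ} {ι : Type} (s : Finset ι) (g : ι → (Fin q → K)) :
    algA K A (∑ i ∈ s, g i) = ∑ i ∈ s, algA K A (g i) := by
  funext k
  simp [algA, Finset.sum_apply]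

theorem algA_single {q : ℕ} (i : Fin q) : algA K A (Pi.single i 1) = Pi.single i 1 := by
  funext k
  simp [algA, Pi.single_apply, apply_ite (algebraMap K A)]

end Stmt9Aux

open Stmt9Aux

/-- Let `m = n + r` and `φ₀` a Lie bracket on `K^m` such that
`N = span(e₁,…,e_n)` is an ideal and `R = span(e_{n+1},…,e_m)` a subalgebra, and let
`δ_l = φ₀(e_{n+l}, ·)|_N`.  For every commutative `K`-algebra `A`, restriction to
`(A⊗N)²` is a bijection from the set of alternating `A`-bilinear Jacobi brackets `φ`
on `A⊗K^m` with `φ(e_i,e_j) = φ₀(e_i,e_j)` whenever `i > n` or `j > n` and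
`φ(e_i,e_j) ∈ A⊗N` for `i,j ≤ n`, onto the set of alternating `A`-bilinear Jacobi
brackets on `A⊗K^n` admitting every (`A`-linearly extended) `δ_l` as a derivation. -/
theorem stmt_9 {r : ℕ} (hm : m = n + r)
    (φ₀ : (Fin m → K) → (Fin m → K) → (Fin m → K))
    (hbil : IsBilin K φ₀)
    (halt : ∀ x, φ₀ x x = 0)
    (hjac : ∀ x y z, φ₀ (φ₀ x y) z + φ₀ (φ₀ y z) x + φ₀ (φ₀ z x) y = 0)
    (hnm : n ≤ m)
    -- `N` is an ideal
    (hNideal : ∀ x y : Fin m → K, (∀ k : Fin m, n ≤ (k : ℕ) → y k = 0) →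
      ∀ k : Fin m, n ≤ (k : ℕ) → φ₀ x y k = 0)
    -- `R` is a Lie subalgebra
    (hRsub : ∀ x y : Fin m → K, (∀ k : Fin m, (k : ℕ) < n → x k = 0) →
      (∀ k : Fin m, (k : ℕ) < n → y k = 0) → ∀ k : Fin m, (k : ℕ) < n → φ₀ x y k = 0) :
    -- the `A`-linear extension of `δ_l` (`l` indexes `R`, i.e. `n ≤ l < m`):
    ∀ DlA : Fin m → (Fin n → A) → (Fin n → A),
    (∀ l : Fin m, n ≤ (l : ℕ) → ∀ (w : Fin n → A) (i : Fin n),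
      DlA l w i = ∑ j : Fin n,
        algebraMap K A
          (φ₀ (Pi.single l 1) (inclFun K m n (Pi.single j 1)) (Fin.castLE hnm i)) * w j) →
    -- Set₁: deformed-shape brackets on `A ⊗ K^m`
    ∀ Set1 : ((Fin m → A) → (Fin m → A) → (Fin m → A)) → Prop,
    (∀ φ, Set1 φ ↔
      (IsBilin A φ ∧ (∀ x, φ x x = 0) ∧
        (∀ x y z, φ (φ x y) z + φ (φ y z) x + φ (φ z x) y = 0) ∧
        (∀ i j : Fin m, (n ≤ (i : ℕ) ∨ n ≤ (j : ℕ)) →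
          φ (Pi.single i 1) (Pi.single j 1)
            = fun k => algebraMap K A (φ₀ (Pi.single i 1) (Pi.single j 1) k)) ∧
        (∀ i j : Fin m, (i : ℕ) < n → (j : ℕ) < n →
          ∀ k : Fin m, n ≤ (k : ℕ) → φ (Pi.single i 1) (Pi.single j 1) k = 0))) →
    -- Set₂: `R`-invariant brackets on `A ⊗ K^n`
    ∀ Set2 : ((Fin n → A) → (Fin n → A) → (Fin n → A)) → Prop,
    (∀ ψ, Set2 ψ ↔
      (IsBilin A ψ ∧ (∀ x, ψ x x = 0) ∧
        (∀ x y z, ψ (ψ x y) z + ψ (ψ y z) x + ψ (ψ z x) y = 0) ∧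
        (∀ l : Fin m, n ≤ (l : ℕ) →
          ∀ x y, DlA l (ψ x y) = ψ (DlA l x) y + ψ x (DlA l y)))) →
    -- conclusion: restriction is a bijection from Set₁ onto Set₂
    ((∀ φ, Set1 φ →
        Set2 (fun x y => restFun A n hnm (φ (inclFun A m n x) (inclFun A m n y)))) ∧
      (∀ ψ, Set2 ψ → ∃! φ, Set1 φ ∧
        (fun x y => restFun A n hnm (φ (inclFun A m n x) (inclFun A m n y))) = ψ)) := by
  intro DlA hD Set1 hS1 Set2 hS2
  subst hm
  classical
  -- basic antisymmetry facts over K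
  have h0anti : ∀ x y, φ₀ x y + φ₀ y x = 0 := bilin_antisym hbil halt
  have hNideal' : ∀ x y : Fin (n+r) → K, (∀ k : Fin (n+r), n ≤ (k : ℕ) → x k = 0) →
      ∀ k : Fin (n+r), n ≤ (k : ℕ) → φ₀ x y k = 0 := by
    intro x y hx k hk
    have h1 : φ₀ x y = -(φ₀ y x) := eq_neg_of_add_eq_zero_left (h0anti x y)
    rw [h1]
    simp [hNideal y x hx k hk]
  have hsingleN : ∀ (j : Fin (n+r)), (j : ℕ) < n → ∀ k : Fin (n+r), n ≤ (k : ℕ) →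
      (Pi.single j 1 : Fin (n+r) → K) k = 0 := by
    intro j hj k hk
    have hkj : k ≠ j := by
      intro h; rw [h] at hk; omega
    simp [Pi.single_apply, hkj]
  have hsingleR : ∀ (j : Fin (n+r)), n ≤ (j : ℕ) → ∀ k : Fin (n+r), (k : ℕ) < n →
      (Pi.single j 1 : Fin (n+r) → K) k = 0 := by
    intro j hj k hk
    have hkj : k ≠ j := by
      intro h; rw [h] at hk; omega
    simp [Pi.single_apply, hkj]
  -- index bookkeeping
  have hca : ∀ j : Fin n, Fin.castAdd r j = Fin.castLE hnm j := fun j => Fin.ext rfl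
  have hmk : ∀ (k : Fin (n+r)) (hk : (k : ℕ) < n), Fin.castLE hnm ⟨(k : ℕ), hk⟩ = k :=
    fun k hk => Fin.ext rfl
  have hmkca : ∀ (p : Fin n) (h : ((Fin.castAdd r p : Fin (n+r)) : ℕ) < n),
      (⟨((Fin.castAdd r p : Fin (n+r)) : ℕ), h⟩ : Fin n) = p := fun p h => Fin.ext rfl
  have hsingle_eq : ∀ (i : Fin (n+r)) (hi : (i : ℕ) < n),
      inclFun A (n+r) n (Pi.single (⟨(i : ℕ), hi⟩ : Fin n) 1) = Pi.single i 1 := by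
    intro i hi
    rw [incl_single hnm, hmk]
  -- key lemma: brackets of Set₁ shape send (A⊗N)² into A⊗N
  have keyN : ∀ φ : (Fin (n+r) → A) → (Fin (n+r) → A) → (Fin (n+r) → A), IsBilin A φ →
      (∀ i j : Fin (n+r), (i : ℕ) < n → (j : ℕ) < n → ∀ k : Fin (n+r), n ≤ (k : ℕ) →
        φ (Pi.single i 1) (Pi.single j 1) k = 0) →
      ∀ (x y : Fin n → A) (k : Fin (n+r)), n ≤ (k : ℕ) →
        φ (inclFun A (n+r) n x) (inclFun A (n+r) n y) k = 0 := by
    intro φ hb hlo x y k hk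
    rw [bilin_expand hb]
    simp only [Finset.sum_apply, Pi.smul_apply, smul_eq_mul]
    refine Finset.sum_eq_zero fun i _ => Finset.sum_eq_zero fun j _ => ?_
    by_cases hi : (i : ℕ) < n
    · by_cases hj2 : (j : ℕ) < n
      · rw [hlo i j hi hj2 k hk, mul_zero]
      · rw [incl_apply_ge _ _ (Nat.le_of_not_lt hj2), mul_zero, zero_mul]
    · rw [incl_apply_ge _ _ (Nat.le_of_not_lt hi), zero_mul, zero_mul]
  -- key lemma: brackets of Set₁ shape act on A⊗N through DlA
  have keyD : ∀ φ : (Fin (n+r) → A) → (Fin (n+r) → A) → (Fin (n+r) → A), IsBilin A φ →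
      (∀ i j : Fin (n+r), (n ≤ (i : ℕ) ∨ n ≤ (j : ℕ)) →
        φ (Pi.single i 1) (Pi.single j 1)
          = fun k => algebraMap K A (φ₀ (Pi.single i 1) (Pi.single j 1) k)) →
      ∀ l : Fin (n+r), n ≤ (l : ℕ) → ∀ w : Fin n → A,
        φ (Pi.single l 1) (inclFun A (n+r) n w) = inclFun A (n+r) n (DlA l w) := by
    intro φ hb hhi l hl w
    have hhik : ∀ (i j : Fin (n+r)), (n ≤ (i : ℕ) ∨ n ≤ (j : ℕ)) → ∀ k,
        φ (Pi.single i 1) (Pi.single j 1) k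
          = algebraMap K A (φ₀ (Pi.single i 1) (Pi.single j 1) k) := by
      intro i j h k; rw [hhi i j h]
    rw [bilin_expand_right hb, Fin.sum_univ_add]
    have h2 : ∀ j : Fin r, inclFun A (n+r) n w (Fin.natAdd n j) •
        φ (Pi.single l 1) (Pi.single (Fin.natAdd n j) 1) = 0 := by
      intro j
      rw [incl_apply_ge _ _ (Nat.le_add_right n (j : ℕ)), zero_smul]
    rw [Finset.sum_eq_zero fun j _ => h2 j, add_zero]
    funext k
    simp only [Finset.sum_apply, Pi.smul_apply, smul_eq_mul]
    by_cases hk : (k : ℕ) < n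
    · rw [incl_apply_lt _ _ hk, hD l hl w ⟨(k : ℕ), hk⟩]
      refine Finset.sum_congr rfl fun j _ => ?_
      rw [incl_castAdd, hhik l _ (Or.inl hl) k, incl_single hnm j (1 : K), hmk k hk, hca j]
      exact mul_comm _ _
    · rw [incl_apply_ge _ _ (Nat.le_of_not_lt hk)]
      refine Finset.sum_eq_zero fun j _ => ?_
      rw [hhik l _ (Or.inl hl) k,
        hNideal _ _ (hsingleN (Fin.castAdd r j) (by simpa using j.isLt)) k (Nat.le_of_not_lt hk),
        map_zero, mul_zero]
  -- the forward map
  have forward : ∀ φ, Set1 φ →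
      Set2 (fun x y => restFun A n hnm (φ (inclFun A (n+r) n x) (inclFun A (n+r) n y))) := by
    intro φ hφ
    obtain ⟨hb, ha, hj, hhi, hlo⟩ := (hS1 φ).mp hφ
    have hinc : ∀ x y : Fin n → A,
        inclFun A (n+r) n (restFun A n hnm (φ (inclFun A (n+r) n x) (inclFun A (n+r) n y)))
          = φ (inclFun A (n+r) n x) (inclFun A (n+r) n y) :=
      fun x y => incl_rest_of hnm _ (keyN φ hb hlo x y)
    rw [hS2]
    refine ⟨⟨fun a x x' y => ?_, fun a x y y' => ?_⟩, fun x => ?_, fun x y z => ?_,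
      fun l hl x y => ?_⟩
    · have h1 : restFun A n hnm (φ (inclFun A (n+r) n (a • x + x')) (inclFun A (n+r) n y))
          = a • restFun A n hnm (φ (inclFun A (n+r) n x) (inclFun A (n+r) n y))
            + restFun A n hnm (φ (inclFun A (n+r) n x') (inclFun A (n+r) n y)) := by
        rw [incl_rawlin a x x', hb.1 a _ _ _, rest_rawlin hnm a _ _]
      exact h1
    · have h1 : restFun A n hnm (φ (inclFun A (n+r) n x) (inclFun A (n+r) n (a • y + y')))
          = a • restFun A n hnm (φ (inclFun A (n+r) n x) (inclFun A (n+r) n y))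
            + restFun A n hnm (φ (inclFun A (n+r) n x) (inclFun A (n+r) n y')) := by
        rw [incl_rawlin a y y', hb.2 a _ _ _, rest_rawlin hnm a _ _]
      exact h1
    · have h1 : restFun A n hnm (φ (inclFun A (n+r) n x) (inclFun A (n+r) n x)) = 0 := by
        rw [ha]
        exact (rest_rawlin hnm).zero
      exact h1
    · have h1 : restFun A n hnm (φ (inclFun A (n+r) n
          (restFun A n hnm (φ (inclFun A (n+r) n x) (inclFun A (n+r) n y))))
            (inclFun A (n+r) n z))
        + restFun A n hnm (φ (inclFun A (n+r) n
          (restFun A n hnm (φ (inclFun A (n+r) n y) (inclFun A (n+r) n z))))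
            (inclFun A (n+r) n x))
        + restFun A n hnm (φ (inclFun A (n+r) n
          (restFun A n hnm (φ (inclFun A (n+r) n z) (inclFun A (n+r) n x))))
            (inclFun A (n+r) n y)) = 0 := by
        rw [hinc x y, hinc y z, hinc z x, ← (rest_rawlin hnm).add, ← (rest_rawlin hnm).add,
          hj, (rest_rawlin hnm).zero]
      exact h1
    · have hD1 : ∀ w : Fin n → A,
          φ (Pi.single l 1) (inclFun A (n+r) n w) = inclFun A (n+r) n (DlA l w) :=
        keyD φ hb hhi l hl
      have big : φ (Pi.single l 1) (φ (inclFun A (n+r) n x) (inclFun A (n+r) n y))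
          = φ (φ (Pi.single l 1) (inclFun A (n+r) n x)) (inclFun A (n+r) n y)
            + φ (inclFun A (n+r) n x) (φ (Pi.single l 1) (inclFun A (n+r) n y)) :=
        jacobi_deriv hb ha hj _ _ _
      rw [hD1 x, hD1 y, ← hinc x y, hD1] at big
      have h1 := congrArg (restFun A n hnm) big
      rw [rest_incl hnm, (rest_rawlin hnm).add] at h1
      exact h1
  constructor
  · exact forward
  · -- backward: construction and uniqueness
    intro ψ hψ2
    obtain ⟨ψb, ψa, ψj, ψd⟩ := (hS2 ψ).mp hψ2
    have hψanti := bilin_antisym ψb ψa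
    set C : Fin (n+r) → Fin (n+r) → (Fin (n+r) → A) := fun i j =>
      if h : (i : ℕ) < n ∧ (j : ℕ) < n then
        inclFun A (n+r) n
          (ψ (Pi.single (⟨(i : ℕ), h.1⟩ : Fin n) 1) (Pi.single (⟨(j : ℕ), h.2⟩ : Fin n) 1))
      else algA K A (φ₀ (Pi.single i 1) (Pi.single j 1)) with hC
    set φd : (Fin (n+r) → A) → (Fin (n+r) → A) → (Fin (n+r) → A) :=
      fun x y => ∑ i, ∑ j, (x i * y j) • C i j with hφd
    have hCfact1 : ∀ i j : Fin (n+r), ¬((i : ℕ) < n ∧ (j : ℕ) < n) →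
        C i j = algA K A (φ₀ (Pi.single i 1) (Pi.single j 1)) := by
      intro i j h
      rw [hC]
      exact dif_neg h
    have hCfact2 : ∀ (i j : Fin (n+r)) (hi : (i : ℕ) < n) (hj : (j : ℕ) < n),
        C i j = inclFun A (n+r) n
          (ψ (Pi.single (⟨(i : ℕ), hi⟩ : Fin n) 1) (Pi.single (⟨(j : ℕ), hj⟩ : Fin n) 1)) := by
      intro i j hi hj
      rw [hC]
      exact dif_pos ⟨hi, hj⟩
    have hφdbil : IsBilin A φd := by
      constructor
      · intro a x x' y
        simp only [hφd]
        rw [Finset.smul_sum]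
        conv_rhs => rw [← Finset.sum_add_distrib]
        refine Finset.sum_congr rfl fun i _ => ?_
        rw [Finset.smul_sum, ← Finset.sum_add_distrib]
        refine Finset.sum_congr rfl fun j _ => ?_
        rw [smul_smul, ← add_smul]
        congr 1
        simp only [Pi.add_apply, Pi.smul_apply, smul_eq_mul]
        ring
      · intro a x y y'
        simp only [hφd]
        rw [Finset.smul_sum]
        conv_rhs => rw [← Finset.sum_add_distrib]
        refine Finset.sum_congr rfl fun i _ => ?_
        rw [Finset.smul_sum, ← Finset.sum_add_distrib]
        refine Finset.sum_congr rfl fun j _ => ?_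
        rw [smul_smul, ← add_smul]
        congr 1
        simp only [Pi.add_apply, Pi.smul_apply, smul_eq_mul]
        ring
    have hφdbasis : ∀ i j : Fin (n+r), φd (Pi.single i 1) (Pi.single j 1) = C i j := by
      intro i j
      simp only [hφd, Pi.single_apply, ite_mul, mul_ite, one_mul, mul_one, zero_mul, mul_zero,
        ite_smul, zero_smul, one_smul, Finset.sum_ite_eq', Finset.mem_univ, if_true]
    have hφdhi : ∀ i j : Fin (n+r), (n ≤ (i : ℕ) ∨ n ≤ (j : ℕ)) →
        φd (Pi.single i 1) (Pi.single j 1)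
          = fun k => algebraMap K A (φ₀ (Pi.single i 1) (Pi.single j 1) k) := by
      intro i j h
      rw [hφdbasis, hCfact1 i j (fun hc => h.elim (fun hi => absurd hc.1 (Nat.not_lt.mpr hi))
        (fun hj => absurd hc.2 (Nat.not_lt.mpr hj)))]
      rfl
    have hφdalt : ∀ x, φd x x = 0 := by
      refine bilin_alt_of_basis hφdbil ?_ ?_
      · intro i j
        rw [hφdbasis, hφdbasis]
        by_cases hij : (i : ℕ) < n ∧ (j : ℕ) < n
        · rw [hCfact2 i j hij.1 hij.2, hCfact2 j i hij.2 hij.1, ← (incl_rawlin).add, hψanti]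
          exact (incl_rawlin).zero
        · have hij' : ¬((j : ℕ) < n ∧ (i : ℕ) < n) := fun h => hij ⟨h.2, h.1⟩
          rw [hCfact1 i j hij, hCfact1 j i hij', ← algA_add, h0anti, algA_zero]
      · intro i
        rw [hφdbasis]
        by_cases hi : (i : ℕ) < n
        · rw [hCfact2 i i hi hi, ψa]
          exact (incl_rawlin).zero
        · rw [hCfact1 i i (fun h => hi h.1), halt, algA_zero]
    have hφdanti := bilin_antisym hφdbil hφdalt
    -- expansion lemmas for φd
    have hB1 : ∀ (u : Fin (n+r) → K) (q : Fin (n+r)),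
        ((∀ p : Fin (n+r), (p : ℕ) < n → u p = 0) ∨ n ≤ (q : ℕ)) →
        φd (algA K A u) (Pi.single q 1) = algA K A (φ₀ u (Pi.single q 1)) := by
      intro u q hu
      rw [bilin_expand_left hφdbil, bilin_expand_left hbil u (Pi.single q 1), algA_sum]
      refine Finset.sum_congr rfl fun p _ => ?_
      rw [hφdbasis, algA_smul]
      simp only [algA_apply]
      by_cases hp : (p : ℕ) < n
      · rcases hu with hu | hq
        · rw [hu p hp, map_zero, zero_smul, zero_smul]
        · rw [hCfact1 p q (fun h => absurd h.2 (Nat.not_lt.mpr hq))]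
      · rw [hCfact1 p q (fun h => absurd h.1 hp)]
    have hB3 : ∀ (u : Fin (n+r) → K) (q : Fin (n+r)) (hq : (q : ℕ) < n),
        (∀ p : Fin (n+r), n ≤ (p : ℕ) → u p = 0) →
        φd (algA K A u) (Pi.single q 1)
          = inclFun A (n+r) n
              (ψ (restFun A n hnm (algA K A u)) (Pi.single (⟨(q : ℕ), hq⟩ : Fin n) 1)) := by
      intro u q hq hu
      rw [bilin_expand_left hφdbil, Fin.sum_univ_add]
      have h2 : ∀ p : Fin r, algA K A u (Fin.natAdd n p) •
          φd (Pi.single (Fin.natAdd n p) 1) (Pi.single q 1) = 0 := by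
        intro p
        simp only [algA_apply]
        rw [hu _ (Nat.le_add_right n (p : ℕ)), map_zero, zero_smul]
      rw [Finset.sum_eq_zero fun p _ => h2 p, add_zero,
        bilin_expand_left ψb (restFun A n hnm (algA K A u)), (incl_rawlin).sum]
      refine Finset.sum_congr rfl fun p _ => ?_
      rw [(incl_rawlin).smul, hφdbasis,
        hCfact2 _ _ (show ((Fin.castAdd r p : Fin (n+r)) : ℕ) < n by simpa using p.isLt) hq,
        hmkca, rest_apply, hca p]
    have hB5 : ∀ (w : Fin n → A) (q : Fin (n+r)) (hq : (q : ℕ) < n),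
        φd (inclFun A (n+r) n w) (Pi.single q 1)
          = inclFun A (n+r) n (ψ w (Pi.single (⟨(q : ℕ), hq⟩ : Fin n) 1)) := by
      intro w q hq
      rw [bilin_expand_left hφdbil, Fin.sum_univ_add]
      have h2 : ∀ p : Fin r, inclFun A (n+r) n w (Fin.natAdd n p) •
          φd (Pi.single (Fin.natAdd n p) 1) (Pi.single q 1) = 0 := by
        intro p
        rw [incl_apply_ge _ _ (Nat.le_add_right n (p : ℕ)), zero_smul]
      rw [Finset.sum_eq_zero fun p _ => h2 p, add_zero,
        bilin_expand_left ψb w, (incl_rawlin).sum]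
      refine Finset.sum_congr rfl fun p _ => ?_
      rw [(incl_rawlin).smul, hφdbasis,
        hCfact2 _ _ (show ((Fin.castAdd r p : Fin (n+r)) : ℕ) < n by simpa using p.isLt) hq,
        hmkca, incl_castAdd]
    have hB4 : ∀ (w : Fin n → A) (q : Fin (n+r)), n ≤ (q : ℕ) →
        φd (inclFun A (n+r) n w) (Pi.single q 1) = - inclFun A (n+r) n (DlA q w) := by
      intro w q hq
      have h1 : φd (Pi.single q 1) (inclFun A (n+r) n w) = inclFun A (n+r) n (DlA q w) :=
        keyD φd hφdbil hφdhi q hq w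
      have h2 := hφdanti (inclFun A (n+r) n w) (Pi.single q 1)
      linear_combination h2 - h1
    have hrestD : ∀ (kk : Fin (n+r)), n ≤ (kk : ℕ) → ∀ (j : Fin (n+r)) (hj : (j : ℕ) < n),
        restFun A n hnm (algA K A (φ₀ (Pi.single kk 1) (Pi.single j 1)))
          = DlA kk (Pi.single (⟨(j : ℕ), hj⟩ : Fin n) 1) := by
      intro kk hk j hj
      funext i
      rw [rest_apply, algA_apply, hD kk hk _ i]
      rw [Finset.sum_eq_single (⟨(j : ℕ), hj⟩ : Fin n)]
      · rw [incl_single hnm, hmk j hj, Pi.single_eq_same, mul_one]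
      · intro b _ hb
        rw [Pi.single_eq_of_ne hb, mul_zero]
      · intro hnot
        exact absurd (Finset.mem_univ _) hnot
    -- Jacobi identity for φd on basis vectors
    have hcoreA : ∀ i j k : Fin (n+r), n ≤ (j : ℕ) → n ≤ (k : ℕ) →
        φd (φd (Pi.single i 1) (Pi.single j 1)) (Pi.single k 1)
          + φd (φd (Pi.single j 1) (Pi.single k 1)) (Pi.single i 1)
          + φd (φd (Pi.single k 1) (Pi.single i 1)) (Pi.single j 1) = 0 := by
      intro i j k hj hk
      have e12 : φd (Pi.single i 1) (Pi.single j 1)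
          = algA K A (φ₀ (Pi.single i 1) (Pi.single j 1)) := by
        rw [hφdbasis]
        exact hCfact1 _ _ (fun hc => absurd hc.2 (Nat.not_lt.mpr hj))
      have e23 : φd (Pi.single j 1) (Pi.single k 1)
          = algA K A (φ₀ (Pi.single j 1) (Pi.single k 1)) := by
        rw [hφdbasis]
        exact hCfact1 _ _ (fun hc => absurd hc.1 (Nat.not_lt.mpr hj))
      have e31 : φd (Pi.single k 1) (Pi.single i 1)
          = algA K A (φ₀ (Pi.single k 1) (Pi.single i 1)) := by
        rw [hφdbasis]
        exact hCfact1 _ _ (fun hc => absurd hc.1 (Nat.not_lt.mpr hk))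
      rw [e12, e23, e31, hB1 _ k (Or.inr hk),
        hB1 _ i (Or.inl (fun p hp => hRsub _ _ (hsingleR j hj) (hsingleR k hk) p hp)),
        hB1 _ j (Or.inr hj), ← algA_add, ← algA_add, hjac, algA_zero]
    have hcoreLLH : ∀ i j k : Fin (n+r), (i : ℕ) < n → (j : ℕ) < n → n ≤ (k : ℕ) →
        φd (φd (Pi.single i 1) (Pi.single j 1)) (Pi.single k 1)
          + φd (φd (Pi.single j 1) (Pi.single k 1)) (Pi.single i 1)
          + φd (φd (Pi.single k 1) (Pi.single i 1)) (Pi.single j 1) = 0 := by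
      intro i j k hi hj hk
      have e12 : φd (Pi.single i 1) (Pi.single j 1)
          = inclFun A (n+r) n
              (ψ (Pi.single (⟨(i : ℕ), hi⟩ : Fin n) 1) (Pi.single (⟨(j : ℕ), hj⟩ : Fin n) 1)) := by
        rw [hφdbasis]
        exact hCfact2 i j hi hj
      have e23 : φd (Pi.single j 1) (Pi.single k 1)
          = algA K A (φ₀ (Pi.single j 1) (Pi.single k 1)) := by
        rw [hφdbasis]
        exact hCfact1 _ _ (fun hc => absurd hc.2 (Nat.not_lt.mpr hk))
      have e31 : φd (Pi.single k 1) (Pi.single i 1)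
          = algA K A (φ₀ (Pi.single k 1) (Pi.single i 1)) := by
        rw [hφdbasis]
        exact hCfact1 _ _ (fun hc => absurd hc.1 (Nat.not_lt.mpr hk))
      have hu2 : ∀ p : Fin (n+r), n ≤ (p : ℕ) → φ₀ (Pi.single j 1) (Pi.single k 1) p = 0 :=
        fun p hp => hNideal' _ _ (hsingleN j hj) p hp
      have hu3 : ∀ p : Fin (n+r), n ≤ (p : ℕ) → φ₀ (Pi.single k 1) (Pi.single i 1) p = 0 :=
        fun p hp => hNideal _ _ (hsingleN i hi) p hp
      have hT2 : restFun A n hnm (algA K A (φ₀ (Pi.single j 1) (Pi.single k 1)))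
          = -(DlA k (Pi.single (⟨(j : ℕ), hj⟩ : Fin n) 1)) := by
        have hx : φ₀ (Pi.single j 1) (Pi.single k 1)
            = -(φ₀ (Pi.single k 1) (Pi.single j 1)) :=
          eq_neg_of_add_eq_zero_left (h0anti _ _)
        rw [hx, algA_neg, (rest_rawlin hnm).neg, hrestD k hk j hj]
      have hT3 : restFun A n hnm (algA K A (φ₀ (Pi.single k 1) (Pi.single i 1)))
          = DlA k (Pi.single (⟨(i : ℕ), hi⟩ : Fin n) 1) := hrestD k hk i hi
      rw [e12, e23, e31, hB4 _ k hk, hB3 _ i hi hu2, hB3 _ j hj hu3, hT2, hT3]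
      rw [← (incl_rawlin).neg, ← (incl_rawlin).add, ← (incl_rawlin).add]
      have hz : -(DlA k (ψ (Pi.single (⟨(i : ℕ), hi⟩ : Fin n) 1)
            (Pi.single (⟨(j : ℕ), hj⟩ : Fin n) 1)))
          + ψ (-(DlA k (Pi.single (⟨(j : ℕ), hj⟩ : Fin n) 1)))
              (Pi.single (⟨(i : ℕ), hi⟩ : Fin n) 1)
          + ψ (DlA k (Pi.single (⟨(i : ℕ), hi⟩ : Fin n) 1))
              (Pi.single (⟨(j : ℕ), hj⟩ : Fin n) 1) = 0 := by
        rw [bilin_neg_left ψb]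
        have hder := ψd k hk (Pi.single (⟨(i : ℕ), hi⟩ : Fin n) 1)
          (Pi.single (⟨(j : ℕ), hj⟩ : Fin n) 1)
        have hanti2 := hψanti (Pi.single (⟨(i : ℕ), hi⟩ : Fin n) 1)
          (DlA k (Pi.single (⟨(j : ℕ), hj⟩ : Fin n) 1))
        linear_combination -hder - hanti2
      rw [hz]
      exact (incl_rawlin).zero
    have hcoreLLL : ∀ i j k : Fin (n+r), (i : ℕ) < n → (j : ℕ) < n → (k : ℕ) < n →
        φd (φd (Pi.single i 1) (Pi.single j 1)) (Pi.single k 1)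
          + φd (φd (Pi.single j 1) (Pi.single k 1)) (Pi.single i 1)
          + φd (φd (Pi.single k 1) (Pi.single i 1)) (Pi.single j 1) = 0 := by
      intro i j k hi hj hk
      have e12 : φd (Pi.single i 1) (Pi.single j 1)
          = inclFun A (n+r) n
              (ψ (Pi.single (⟨(i : ℕ), hi⟩ : Fin n) 1) (Pi.single (⟨(j : ℕ), hj⟩ : Fin n) 1)) := by
        rw [hφdbasis]; exact hCfact2 i j hi hj
      have e23 : φd (Pi.single j 1) (Pi.single k 1)
          = inclFun A (n+r) n
              (ψ (Pi.single (⟨(j : ℕ), hj⟩ : Fin n) 1) (Pi.single (⟨(k : ℕ), hk⟩ : Fin n) 1)) := by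
        rw [hφdbasis]; exact hCfact2 j k hj hk
      have e31 : φd (Pi.single k 1) (Pi.single i 1)
          = inclFun A (n+r) n
              (ψ (Pi.single (⟨(k : ℕ), hk⟩ : Fin n) 1) (Pi.single (⟨(i : ℕ), hi⟩ : Fin n) 1)) := by
        rw [hφdbasis]; exact hCfact2 k i hk hi
      rw [e12, e23, e31, hB5 _ k hk, hB5 _ i hi, hB5 _ j hj,
        ← (incl_rawlin).add, ← (incl_rawlin).add, ψj]
      exact (incl_rawlin).zero
    have hJcyc : ∀ i j k : Fin (n+r),
        φd (φd (Pi.single i 1) (Pi.single j 1)) (Pi.single k 1)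
          + φd (φd (Pi.single j 1) (Pi.single k 1)) (Pi.single i 1)
          + φd (φd (Pi.single k 1) (Pi.single i 1)) (Pi.single j 1)
        = φd (φd (Pi.single j 1) (Pi.single k 1)) (Pi.single i 1)
          + φd (φd (Pi.single k 1) (Pi.single i 1)) (Pi.single j 1)
          + φd (φd (Pi.single i 1) (Pi.single j 1)) (Pi.single k 1) := by
      intro i j k
      ring
    have hJb : ∀ i j k : Fin (n+r),
        φd (φd (Pi.single i 1) (Pi.single j 1)) (Pi.single k 1)
          + φd (φd (Pi.single j 1) (Pi.single k 1)) (Pi.single i 1)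
          + φd (φd (Pi.single k 1) (Pi.single i 1)) (Pi.single j 1) = 0 := by
      intro i j k
      rcases Nat.lt_or_ge (i : ℕ) n with hi | hi
      · rcases Nat.lt_or_ge (j : ℕ) n with hj | hj
        · rcases Nat.lt_or_ge (k : ℕ) n with hk | hk
          · exact hcoreLLL i j k hi hj hk
          · exact hcoreLLH i j k hi hj hk
        · rcases Nat.lt_or_ge (k : ℕ) n with hk | hk
          · rw [hJcyc i j k, hJcyc j k i]
            exact hcoreLLH k i j hk hi hj
          · exact hcoreA i j k hj hk
      · rcases Nat.lt_or_ge (j : ℕ) n with hj | hj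
        · rcases Nat.lt_or_ge (k : ℕ) n with hk | hk
          · rw [hJcyc i j k]
            exact hcoreLLH j k i hj hk hi
          · rw [hJcyc i j k]
            exact hcoreA j k i hk hi
        · rcases Nat.lt_or_ge (k : ℕ) n with hk | hk
          · rw [hJcyc i j k, hJcyc j k i]
            exact hcoreA k i j hi hj
          · exact hcoreA i j k hj hk
    have hφdjac : ∀ x y z, φd (φd x y) z + φd (φd y z) x + φd (φd z x) y = 0 :=
      jacobi_of_basis hφdbil hJb
    have hφdlo : ∀ i j : Fin (n+r), (i : ℕ) < n → (j : ℕ) < n →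
        ∀ k : Fin (n+r), n ≤ (k : ℕ) → φd (Pi.single i 1) (Pi.single j 1) k = 0 := by
      intro i j hi hj k hk
      rw [hφdbasis, hCfact2 i j hi hj]
      exact incl_apply_ge _ _ hk
    have hSet1φd : Set1 φd := by
      rw [hS1]
      exact ⟨hφdbil, hφdalt, hφdjac, hφdhi, hφdlo⟩
    have hrest : (fun x y => restFun A n hnm (φd (inclFun A (n+r) n x) (inclFun A (n+r) n y)))
        = ψ := by
      funext x y
      have h1 : φd (inclFun A (n+r) n x) (inclFun A (n+r) n y)
          = inclFun A (n+r) n (ψ x y) := by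
        rw [bilin_expand_right hφdbil, Fin.sum_univ_add]
        have h2 : ∀ p : Fin r, inclFun A (n+r) n y (Fin.natAdd n p) •
            φd (inclFun A (n+r) n x) (Pi.single (Fin.natAdd n p) 1) = 0 := by
          intro p
          rw [incl_apply_ge _ _ (Nat.le_add_right n (p : ℕ)), zero_smul]
        rw [Finset.sum_eq_zero fun p _ => h2 p, add_zero,
          bilin_expand_right ψb x y, (incl_rawlin).sum]
        refine Finset.sum_congr rfl fun p _ => ?_
        rw [(incl_rawlin).smul, incl_castAdd,
          hB5 x _ (show ((Fin.castAdd r p : Fin (n+r)) : ℕ) < n by simpa using p.isLt), hmkca]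
      show restFun A n hnm (φd (inclFun A (n+r) n x) (inclFun A (n+r) n y)) = ψ x y
      rw [h1, rest_incl hnm]
    refine ⟨φd, ⟨hSet1φd, hrest⟩, ?_⟩
    rintro φ' ⟨h1', h2'⟩
    obtain ⟨hb', ha', hj', hhi', hlo'⟩ := (hS1 φ').mp h1'
    refine bilin_ext hb' hφdbil ?_
    intro i j
    by_cases hij : (i : ℕ) < n ∧ (j : ℕ) < n
    · have hv : ∀ k : Fin (n+r), n ≤ (k : ℕ) → φ' (Pi.single i 1) (Pi.single j 1) k = 0 :=
        fun k hk => hlo' i j hij.1 hij.2 k hk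
      have h3 : inclFun A (n+r) n (restFun A n hnm (φ' (Pi.single i 1) (Pi.single j 1)))
          = φ' (Pi.single i 1) (Pi.single j 1) := incl_rest_of hnm _ hv
      have h4 := congrFun (congrFun h2' (Pi.single (⟨(i : ℕ), hij.1⟩ : Fin n) 1))
        (Pi.single (⟨(j : ℕ), hij.2⟩ : Fin n) 1)
      rw [hsingle_eq i hij.1, hsingle_eq j hij.2] at h4
      rw [← h3, hφdbasis, hCfact2 i j hij.1 hij.2, h4]
    · have hOr : n ≤ (i : ℕ) ∨ n ≤ (j : ℕ) := by
        by_cases h : (i : ℕ) < n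
        · exact Or.inr (Nat.le_of_not_lt fun hj => hij ⟨h, hj⟩)
        · exact Or.inl (Nat.le_of_not_lt h)
      rw [hhi' i j hOr, hφdbasis, hCfact1 i j hij]
      rfl


end Stmt9
end

section
/- Let K be an algebraically closed field of characteristic 0, g = (V, φ₀) a finite-dimensional Lie algebra, R a Lie subalgebra and N an ideal with g = R ⊕ N, and p : g → N the projection along R. For q ≥ 1 and f : N^q → N an alternating q-linear R-invariant map (i.e. [r, f(x₁,…,x_q)] = Σ_i f(x₁,…,[r,x_i],…,x_q) for all r ∈ R, x_i ∈ N), set i(f) := f∘(p×⋯×p), an alternating q-linear map g^q → g. Then d_g(i(f)) = i(d_N f), where d_g and d_N denote the Chevalley–Eilenberg differentials of g and of the Lie algebra N = (N, φ₀|_N) with adjoint coefficients. Consequently Z^q(g,g) ∩ i(C^q(N,N)^R) = i(Z^q(N,N)^R): for R-invariant f, i(f) is a cocycle of g if and only if f is a cocycle of N. -/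
section Aux

lemma sa_val {n : ℕ} (i : Fin (n+1)) (k : Fin n) :
    ((i.succAbove k : Fin (n+1)) : ℕ) = if (k:ℕ) < (i:ℕ) then (k:ℕ) else (k:ℕ)+1 := by
  rw [Fin.succAbove]
  split_ifs with h1 h2 h2 <;> simp_all [Fin.lt_def]

lemma sa_jsub {n : ℕ} (i j : Fin (n+2)) (h : (i:ℕ) < (j:ℕ)) (hj : (j:ℕ)-1 < n+1) :
    i.succAbove (⟨(j:ℕ)-1, hj⟩ : Fin (n+1)) = j := by
  apply Fin.ext
  rw [sa_val]
  simp only [Fin.val_mk]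
  have := j.isLt
  split_ifs <;> omega

lemma sa_swap {n : ℕ} (i j : Fin (n+2)) (h : (i:ℕ) < (j:ℕ))
    (h1 : (j:ℕ)-1 < n+1) (h2 : (i:ℕ) < n+1) (k : Fin n) :
    i.succAbove ((⟨(j:ℕ)-1, h1⟩ : Fin (n+1)).succAbove k)
      = j.succAbove ((⟨(i:ℕ), h2⟩ : Fin (n+1)).succAbove k) := by
  apply Fin.ext
  rw [sa_val, sa_val, sa_val, sa_val]
  simp only [Fin.val_mk]
  split_ifs <;> omega

lemma csurj {n : ℕ} (i j : Fin (n+2)) (h : (i:ℕ) < (j:ℕ)) (hj : (j:ℕ)-1 < n+1)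
    (i₀ : Fin (n+2)) (hi : i₀ ≠ i) (hij : i₀ ≠ j) :
    ∃ m : Fin n, i.succAbove ((⟨(j:ℕ)-1, hj⟩ : Fin (n+1)).succAbove m) = i₀ := by
  obtain ⟨a, ha⟩ := Fin.exists_succAbove_eq hi
  have haj : a ≠ ⟨(j:ℕ)-1, hj⟩ := by
    rintro rfl
    exact hij (by rw [← ha, sa_jsub i j h hj])
  obtain ⟨m, hm⟩ := Fin.exists_succAbove_eq haj
  exact ⟨m, by rw [hm, ha]⟩

lemma update_eq_cons_comp {n : ℕ} {α : Type*} (y : Fin (n+1) → α) (m : Fin (n+1)) (b : α) :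
    Function.update y m b = (Fin.cons b (y ∘ m.succAbove)) ∘ ⇑(Fin.cycleRange m) := by
  funext k
  rcases lt_trichotomy k m with hk | rfl | hk
  · have hkn : (k:ℕ) < n := lt_of_lt_of_le (Fin.lt_def.mp hk) (Nat.lt_succ_iff.mp m.isLt)
    have h1 : Fin.cycleRange m k = Fin.succ ⟨(k:ℕ), hkn⟩ := by
      apply Fin.ext
      rw [Fin.coe_cycleRange_of_lt hk]; simp
    have h2 : m.succAbove ⟨(k:ℕ), hkn⟩ = k := by
      apply Fin.ext; rw [sa_val]; simp [Fin.lt_def.mp hk]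
    simp only [Function.comp_apply, h1, Fin.cons_succ, h2,
      Function.update_of_ne (ne_of_lt hk)]
  · simp [Fin.cycleRange_self]
  · have hklt := Fin.lt_def.mp hk
    have hkn : (k:ℕ) - 1 < n := by have := k.isLt; omega
    have h1 : Fin.cycleRange m k = Fin.succ ⟨(k:ℕ)-1, hkn⟩ := by
      apply Fin.ext
      rw [Fin.cycleRange_of_gt hk]
      simp only [Fin.val_succ, Fin.val_mk]; omega
    have h2 : m.succAbove ⟨(k:ℕ)-1, hkn⟩ = k := by
      apply Fin.ext; rw [sa_val]; simp only [Fin.val_mk]; split_ifs <;> omega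
    simp only [Function.comp_apply, h1, Fin.cons_succ, h2]
    rw [Function.update_of_ne (ne_of_gt hk)]

lemma alt_move {K : Type} [Field K] {g : Type} [AddCommGroup g] [Module K g] {n : ℕ}
    (G : AlternatingMap K g g (Fin (n+1))) (y : Fin (n+1) → g) (m : Fin (n+1)) (b : g) :
    G (Function.update y m b) = ((-1:ℤ)^(m:ℕ)) • G (Fin.cons b (y ∘ m.succAbove)) := by
  rw [update_eq_cons_comp, G.map_perm, Fin.sign_cycleRange]
  simp [Units.smul_def]

variable {K : Type} [Field K] {g : Type} [AddCommGroup g] [Module K g] {q : ℕ}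
variable {F : (Fin (q + 1) → g) → g}

lemma Fadd
    (hmul : ∀ (x : Fin (q + 1) → g) (i : Fin (q + 1)) (a : K) (u v : g),
      F (Function.update x i (a • u + v))
        = a • F (Function.update x i u) + F (Function.update x i v))
    (z : Fin (q+1) → g) (i : Fin (q+1)) (u v : g) :
    F (Function.update z i (u + v)) = F (Function.update z i u) + F (Function.update z i v) := by
  have h := hmul z i 1 u v
  rwa [one_smul, one_smul] at h

lemma Fzero
    (hmul : ∀ (x : Fin (q + 1) → g) (i : Fin (q + 1)) (a : K) (u v : g),
      F (Function.update x i (a • u + v))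
        = a • F (Function.update x i u) + F (Function.update x i v))
    (z : Fin (q+1) → g) (i : Fin (q+1)) :
    F (Function.update z i 0) = 0 := by
  have h := Fadd hmul z i 0 0
  rw [add_zero] at h
  exact left_eq_add.mp h

lemma Fsmul
    (hmul : ∀ (x : Fin (q + 1) → g) (i : Fin (q + 1)) (a : K) (u v : g),
      F (Function.update x i (a • u + v))
        = a • F (Function.update x i u) + F (Function.update x i v))
    (z : Fin (q+1) → g) (i : Fin (q+1)) (a : K) (u : g) :
    F (Function.update z i (a • u)) = a • F (Function.update z i u) := by
  have h := hmul z i a u 0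
  rwa [add_zero, Fzero hmul, add_zero] at h

def mkAlt
    (F : (Fin (q + 1) → g) → g)
    (hmul : ∀ (x : Fin (q + 1) → g) (i : Fin (q + 1)) (a : K) (u v : g),
      F (Function.update x i (a • u + v))
        = a • F (Function.update x i u) + F (Function.update x i v))
    (halt : ∀ (x : Fin (q+1) → g) (i j : Fin (q+1)), i ≠ j → x i = x j → F x = 0) :
    AlternatingMap K g g (Fin (q+1)) where
  toFun := F
  map_update_add' := by
    intro dec z i u v
    rw [Subsingleton.elim dec (instDecidableEqFin _)]
    exact Fadd hmul z i u v
  map_update_smul' := by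
    intro dec z i a u
    rw [Subsingleton.elim dec (instDecidableEqFin _)]
    exact Fsmul hmul z i a u
  map_eq_zero_of_eq' := fun v i j hv hij => halt v i j hij hv

lemma Fmove
    (hmul : ∀ (x : Fin (q + 1) → g) (i : Fin (q + 1)) (a : K) (u v : g),
      F (Function.update x i (a • u + v))
        = a • F (Function.update x i u) + F (Function.update x i v))
    (halt : ∀ (x : Fin (q+1) → g) (i j : Fin (q+1)), i ≠ j → x i = x j → F x = 0)
    (y : Fin (q+1) → g) (m : Fin (q+1)) (b : g) :
    F (Function.update y m b) = ((-1:ℤ)^(m:ℕ)) • F (Fin.cons b (y ∘ m.succAbove)) :=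
  alt_move (mkAlt F hmul halt) y m b

lemma FconsAdd
    (hmul : ∀ (x : Fin (q + 1) → g) (i : Fin (q + 1)) (a : K) (u v : g),
      F (Function.update x i (a • u + v))
        = a • F (Function.update x i u) + F (Function.update x i v))
    (b b' : g) (t : Fin q → g) :
    F (Fin.cons (b + b') t) = F (Fin.cons b t) + F (Fin.cons b' t) := by
  have h := Fadd hmul (Fin.cons b t) 0 b b'
  rwa [Fin.update_cons_zero, Fin.update_cons_zero, Fin.update_cons_zero] at h

lemma FconsZero
    (hmul : ∀ (x : Fin (q + 1) → g) (i : Fin (q + 1)) (a : K) (u v : g),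
      F (Function.update x i (a • u + v))
        = a • F (Function.update x i u) + F (Function.update x i v))
    (t : Fin q → g) : F (Fin.cons 0 t) = 0 := by
  have h := Fzero hmul (Fin.cons (0:g) t) 0
  rwa [Fin.update_cons_zero] at h

lemma FconsNeg
    (hmul : ∀ (x : Fin (q + 1) → g) (i : Fin (q + 1)) (a : K) (u v : g),
      F (Function.update x i (a • u + v))
        = a • F (Function.update x i u) + F (Function.update x i v))
    (b : g) (t : Fin q → g) :
    F (Fin.cons (-b) t) = - F (Fin.cons b t) := by
  have h := FconsAdd hmul b (-b) t
  rw [add_neg_cancel, FconsZero hmul] at h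
  exact eq_neg_of_add_eq_zero_right h.symm

lemma tail_upd {α : Type*} {n : ℕ} (x : Fin (n+2) → α) (i' j' : Fin (n+2))
    (h : (i':ℕ) < (j':ℕ)) (hj : (j':ℕ)-1 < n+1)
    (i : Fin (n+2)) (hi : i ≠ i') (hij : i ≠ j') :
    ∃ m : Fin n, ∀ w : α,
      (fun k => (Function.update x i w) (i'.succAbove ((⟨(j':ℕ)-1, hj⟩ : Fin (n+1)).succAbove k)))
        = Function.update (fun k => x (i'.succAbove ((⟨(j':ℕ)-1, hj⟩ : Fin (n+1)).succAbove k))) m w := by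
  obtain ⟨m, hm⟩ := csurj i' j' h hj i hi hij
  refine ⟨m, fun w => ?_⟩
  funext k
  by_cases hk : k = m
  · subst hk; rw [hm]; simp
  · have hne : i'.succAbove ((⟨(j':ℕ)-1, hj⟩ : Fin (n+1)).succAbove k) ≠ i := by
      rw [← hm]
      intro hEq
      exact hk (Fin.succAbove_right_injective (Fin.succAbove_right_injective hEq))
    rw [Function.update_of_ne hne, Function.update_of_ne hk]

lemma comp_upd {α : Type*} {n : ℕ} (x : Fin (n+2) → α) (i' i : Fin (n+2)) (hi : i ≠ i') :
    ∃ m : Fin (n+1), ∀ w : α,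
      (Function.update x i w) ∘ i'.succAbove = Function.update (x ∘ i'.succAbove) m w := by
  obtain ⟨m, hm⟩ := Fin.exists_succAbove_eq hi
  refine ⟨m, fun w => ?_⟩
  funext k
  by_cases hk : k = m
  · subst hk; rw [Function.comp_apply, hm]; simp
  · have hne : i'.succAbove k ≠ i := by
      rw [← hm]; exact fun hEq => hk (Fin.succAbove_right_injective hEq)
    rw [Function.comp_apply, Function.update_of_ne hne, Function.update_of_ne hk]
    rfl

lemma comp_upd_self {α : Type*} {n : ℕ} (x : Fin (n+2) → α) (i : Fin (n+2)) (w : α) :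
    (Function.update x i w) ∘ i.succAbove = x ∘ i.succAbove := by
  funext k; exact Function.update_of_ne (Fin.succAbove_ne i k) w x

lemma tail_ne_j {n : ℕ} (i' j' : Fin (n+2)) (h : (i':ℕ) < (j':ℕ)) (hj : (j':ℕ)-1 < n+1)
    (k : Fin n) :
    i'.succAbove ((⟨(j':ℕ)-1, hj⟩ : Fin (n+1)).succAbove k) ≠ j' := by
  intro hEq
  have h2 : i'.succAbove ((⟨(j':ℕ)-1, hj⟩ : Fin (n+1)).succAbove k)
      = i'.succAbove (⟨(j':ℕ)-1, hj⟩ : Fin (n+1)) := by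
    rw [sa_jsub i' j' h hj]; exact hEq
  exact Fin.succAbove_ne _ k (Fin.succAbove_right_injective h2)

end Aux
def ceDiff {g : Type} [LieRing g] {q : ℕ}
    (F : (Fin (q + 1) → g) → g) (x : Fin (q + 2) → g) : g :=
  (∑ i : Fin (q + 2), ((-1 : ℤ) ^ (i : ℕ)) • ⁅x i, F (x ∘ i.succAbove)⁆)
    + ∑ i : Fin (q + 2), ∑ j : Fin (q + 2),
        if h : (i : ℕ) < (j : ℕ) then
          ((-1 : ℤ) ^ ((i : ℕ) + (j : ℕ))) •
            F (Fin.cons ⁅x i, x j⁆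
              (fun k : Fin q =>
                x (i.succAbove ((⟨(j : ℕ) - 1, by have := j.isLt; omega⟩ :
                  Fin (q + 1)).succAbove k))))
        else 0
/-- Let `g = R ⊕ N` with `R` a subalgebra and `N` an ideal,
`p : g → N` the projection along `R`.  If `F` is the extension by zero
`i(f) = f∘(p×⋯×p)` of an `R`-invariant alternating multilinear `(q+1)`-cochain `f` of
`N` (i.e. `F` is multilinear, alternating, `N`-valued, factors through `p`, and is
`R`-invariant on `N`-tuples), then `d_g(i(f)) = i(d_N f)`, i.e.
`ceDiff F x = ceDiff F (p ∘ x)`; consequently `i(f)` is a cocycle of `g` iff `f` is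
a cocycle of `N`. -/
theorem stmt_12 {K : Type} [Field K] [CharZero K] [IsAlgClosed K]
    {g : Type} [LieRing g] [LieAlgebra K g] [FiniteDimensional K g]
    (R : LieSubalgebra K g) (N : LieIdeal K g)
    (hcompl : IsCompl R.toSubmodule (N : Submodule K g))
    (p : g →ₗ[K] g)
    (hpval : ∀ x, p x ∈ N) (hpN : ∀ x ∈ N, p x = x) (hpR : ∀ x ∈ R, p x = 0)
    (q : ℕ)
    (F : (Fin (q + 1) → g) → g)
    (hval : ∀ x, F x ∈ N)
    (hfac : ∀ x : Fin (q + 1) → g, F (fun k => p (x k)) = F x)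
    (hmul : ∀ (x : Fin (q + 1) → g) (i : Fin (q + 1)) (a : K) (u v : g),
      F (Function.update x i (a • u + v))
        = a • F (Function.update x i u) + F (Function.update x i v))
    (halt : ∀ (x : Fin (q + 1) → g) (i j : Fin (q + 1)), i ≠ j → x i = x j → F x = 0)
    (hinv : ∀ r ∈ R, ∀ x : Fin (q + 1) → g, (∀ k, x k ∈ N) →
      ⁅r, F x⁆ = ∑ i : Fin (q + 1), F (Function.update x i ⁅r, x i⁆)) :
    (∀ x : Fin (q + 2) → g, ceDiff F x = ceDiff F (fun k => p (x k))) ∧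
    ((∀ x : Fin (q + 2) → g, ceDiff F x = 0) ↔
      (∀ x : Fin (q + 2) → g, (∀ k, x k ∈ N) → ceDiff F x = 0)) := by
  -- basic F lemmas
  have hFadd := Fadd hmul
  have hFzero := Fzero hmul
  have hFmove := Fmove hmul halt
  have hFconsAdd := FconsAdd hmul
  have hFconsNeg := FconsNeg hmul
  have hFvanish : ∀ (z : Fin (q+1) → g) (m : Fin (q+1)), z m ∈ R → F z = 0 := by
    intro z m hm
    have h1 : (fun k => p (z k)) = Function.update (fun k => p (z k)) m 0 := by
      funext k
      by_cases hk : k = m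
      · subst hk; rw [Function.update_self]; exact hpR _ hm
      · rw [Function.update_of_ne hk]
    rw [← hfac z, h1, hFzero]
  have hsubR : ∀ z : g, z - p z ∈ R := by
    intro z
    have hz : z ∈ R.toSubmodule ⊔ (N : Submodule K g) := by
      rw [hcompl.sup_eq_top]; trivial
    obtain ⟨a, ha, b, hb, rfl⟩ := Submodule.mem_sup.mp hz
    have hpab : p (a + b) = b := by
      rw [map_add, hpR a ha, hpN b hb, zero_add]
    rw [hpab, add_sub_cancel_right]
    exact ha
  -- additivity of ceDiff in each slot
  have hDadd : ∀ (x : Fin (q+2) → g) (i : Fin (q+2)) (u v : g),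
      ceDiff F (Function.update x i (u + v))
        = ceDiff F (Function.update x i u) + ceDiff F (Function.update x i v) := by
    intro x i u v
    unfold ceDiff
    rw [add_add_add_comm]
    congr 1
    · rw [← Finset.sum_add_distrib]
      refine Finset.sum_congr rfl fun i' _ => ?_
      by_cases hii' : i = i'
      · subst hii'
        rw [comp_upd_self x i (u+v), comp_upd_self x i u, comp_upd_self x i v]
        simp only [Function.update_self]
        rw [add_lie, smul_add]
      · obtain ⟨m, hm⟩ := comp_upd x i' i hii'
        have key : F (Function.update x i (u+v) ∘ i'.succAbove)
            = F (Function.update x i u ∘ i'.succAbove) + F (Function.update x i v ∘ i'.succAbove) := by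
          rw [hm (u+v), hm u, hm v]
          exact hFadd _ m u v
        simp only [Function.update_of_ne (Ne.symm hii')]
        rw [key, lie_add, smul_add]
    · rw [← Finset.sum_add_distrib]
      refine Finset.sum_congr rfl fun i' _ => ?_
      rw [← Finset.sum_add_distrib]
      refine Finset.sum_congr rfl fun j' _ => ?_
      by_cases hlt : (i':ℕ) < (j':ℕ)
      · rw [dif_pos hlt, dif_pos hlt, dif_pos hlt]
        have hne_j'i' : j' ≠ i' := Fin.ne_of_val_ne (by omega)
        by_cases hii' : i = i'
        · subst hii'
          have hupd : ∀ (w : g) (kk : Fin (q+1)),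
              Function.update x i w (i.succAbove kk) = x (i.succAbove kk) :=
            fun w kk => Function.update_of_ne (Fin.succAbove_ne i kk) w x
          simp only [Function.update_self, Function.update_of_ne hne_j'i', hupd]
          rw [add_lie, hFconsAdd, smul_add]
        · by_cases hij' : i = j'
          · subst hij'
            have hupd : ∀ (w : g) (kk : Fin q),
                Function.update x i w (i'.succAbove ((⟨(i:ℕ)-1, by have := i.isLt; omega⟩ : Fin (q+1)).succAbove kk))
                  = x (i'.succAbove ((⟨(i:ℕ)-1, by have := i.isLt; omega⟩ : Fin (q+1)).succAbove kk)) :=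
            fun w kk => Function.update_of_ne (tail_ne_j i' i hlt _ kk) w x
            simp only [Function.update_self, Function.update_of_ne (Ne.symm hii'), hupd]
            rw [lie_add, hFconsAdd, smul_add]
          · obtain ⟨m, hm⟩ := tail_upd x i' j' hlt (by have := j'.isLt; omega) i hii' hij'
            have key : F (Fin.cons ⁅x i', x j'⁆ (fun k => Function.update x i (u+v) (i'.succAbove ((⟨(j':ℕ)-1, by have := j'.isLt; omega⟩ : Fin (q+1)).succAbove k))))
                = F (Fin.cons ⁅x i', x j'⁆ (fun k => Function.update x i u (i'.succAbove ((⟨(j':ℕ)-1, by have := j'.isLt; omega⟩ : Fin (q+1)).succAbove k))))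
                + F (Fin.cons ⁅x i', x j'⁆ (fun k => Function.update x i v (i'.succAbove ((⟨(j':ℕ)-1, by have := j'.isLt; omega⟩ : Fin (q+1)).succAbove k)))) := by
              rw [hm (u+v), hm u, hm v, Fin.cons_update, Fin.cons_update, Fin.cons_update]
              exact hFadd _ _ u v
            simp only [Function.update_of_ne (Ne.symm hii'), Function.update_of_ne (Ne.symm hij')]
            rw [key, smul_add]
      · rw [dif_neg hlt, dif_neg hlt, dif_neg hlt, add_zero]
  -- key lemma: one slot in R, the rest in N
  have hKey : ∀ (x : Fin (q+2) → g) (i₀ : Fin (q+2)), x i₀ ∈ R →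
      (∀ k, k ≠ i₀ → x k ∈ N) → ceDiff F x = 0 := by
    intro x i₀ hR0 hN0
    unfold ceDiff
    have htN : ∀ m : Fin (q+1), (x ∘ i₀.succAbove) m ∈ N :=
      fun m => hN0 _ (Fin.succAbove_ne i₀ m)
    have e1 : (∑ i : Fin (q+2), ((-1:ℤ)^(i:ℕ)) • ⁅x i, F (x ∘ i.succAbove)⁆)
        = ∑ m : Fin (q+1), ((-1:ℤ)^((i₀:ℕ)+(m:ℕ))) •
            F (Fin.cons ⁅x i₀, (x ∘ i₀.succAbove) m⁆ ((x ∘ i₀.succAbove) ∘ m.succAbove)) := by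
      rw [Finset.sum_eq_single i₀]
      · rw [hinv (x i₀) hR0 (x ∘ i₀.succAbove) htN, Finset.smul_sum]
        refine Finset.sum_congr rfl fun m _ => ?_
        rw [hFmove (x ∘ i₀.succAbove) m ⁅x i₀, (x ∘ i₀.succAbove) m⁆, smul_smul, ← pow_add]
      · intro i _ hne
        obtain ⟨m, hm⟩ := Fin.exists_succAbove_eq (Ne.symm hne)
        rw [hFvanish (x ∘ i.succAbove) m (by rw [Function.comp_apply, hm]; exact hR0),
          lie_zero, smul_zero]
      · intro h; exact absurd (Finset.mem_univ i₀) h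
    rw [e1]
    have e2 : ∀ i : Fin (q+2), i ≠ i₀ →
        (∑ j : Fin (q+2),
          if h : (i : ℕ) < (j : ℕ) then
            ((-1 : ℤ) ^ ((i : ℕ) + (j : ℕ))) •
              F (Fin.cons ⁅x i, x j⁆
                (fun k : Fin q =>
                  x (i.succAbove ((⟨(j : ℕ) - 1, by have := j.isLt; omega⟩ :
                    Fin (q + 1)).succAbove k))))
          else 0)
        = (if h : (i : ℕ) < (i₀ : ℕ) then
            ((-1 : ℤ) ^ ((i : ℕ) + (i₀ : ℕ))) •
              F (Fin.cons ⁅x i, x i₀⁆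
                (fun k : Fin q =>
                  x (i.succAbove ((⟨(i₀ : ℕ) - 1, by have := i₀.isLt; omega⟩ :
                    Fin (q + 1)).succAbove k))))
          else 0) := by
      intro i hne
      rw [Finset.sum_eq_single i₀]
      · intro j _ hji₀
        by_cases hij : (i:ℕ) < (j:ℕ)
        · rw [dif_pos hij]
          obtain ⟨m, hm⟩ := csurj i j hij (by have := j.isLt; omega) i₀ (Ne.symm hne) (Ne.symm hji₀)
          rw [hFvanish (Fin.cons ⁅x i, x j⁆
                (fun k : Fin q =>
                  x (i.succAbove ((⟨(j : ℕ) - 1, by have := j.isLt; omega⟩ :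
                    Fin (q + 1)).succAbove k)))) m.succ
              (by rw [Fin.cons_succ, hm]; exact hR0), smul_zero]
        · rw [dif_neg hij]
      · intro h; exact absurd (Finset.mem_univ i₀) h
    rw [Fin.sum_univ_succAbove _ i₀, Fin.sum_univ_succAbove _ i₀,
      dif_neg (lt_irrefl (i₀:ℕ)), zero_add]
    rw [Finset.sum_congr rfl (fun a (_ : a ∈ Finset.univ) =>
      e2 (i₀.succAbove a) (Fin.succAbove_ne i₀ a))]
    rw [← Finset.sum_add_distrib, ← Finset.sum_add_distrib]
    apply Finset.sum_eq_zero
    intro a _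
    have hvne : ((i₀.succAbove a):ℕ) ≠ (i₀:ℕ) := fun h => (Fin.succAbove_ne i₀ a) (Fin.ext h)
    have hv := sa_val i₀ a
    rcases Nat.lt_or_ge (i₀:ℕ) ((i₀.succAbove a):ℕ) with hlt | hge
    · have hjval : ((i₀.succAbove a):ℕ) = (a:ℕ)+1 := by
        split_ifs at hv <;> omega
      rw [dif_pos hlt, dif_neg (show ¬ ((i₀.succAbove a:ℕ) < (i₀:ℕ)) by omega), add_zero]
      have hmk : (⟨((i₀.succAbove a):ℕ)-1, by have := (i₀.succAbove a).isLt; omega⟩ : Fin (q+1)) = a :=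
        Fin.ext (by simp only [Fin.val_mk]; omega)
      rw [hmk]
      rw [show ((-1:ℤ))^((i₀:ℕ)+((i₀.succAbove a):ℕ)) = -((-1:ℤ)^((i₀:ℕ)+(a:ℕ))) from by
        rw [show (i₀:ℕ)+((i₀.succAbove a):ℕ) = ((i₀:ℕ)+(a:ℕ))+1 from by omega, pow_succ]; ring]
      rw [neg_smul]
      exact add_neg_cancel _
    · have hgt : ((i₀.succAbove a):ℕ) < (i₀:ℕ) := by omega
      have hjval : ((i₀.succAbove a):ℕ) = (a:ℕ) := by
        split_ifs at hv <;> omega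
      rw [dif_neg (show ¬ ((i₀:ℕ) < ((i₀.succAbove a):ℕ)) by omega), zero_add,
        dif_pos hgt]
      have htail2 : ∀ k : Fin q,
          (i₀.succAbove a).succAbove ((⟨(i₀:ℕ)-1, by have := i₀.isLt; omega⟩ : Fin (q+1)).succAbove k)
            = i₀.succAbove (a.succAbove k) := by
        intro k
        have hs := sa_swap (i₀.succAbove a) i₀ hgt (by have := i₀.isLt; omega)
          (by have := (i₀.succAbove a).isLt; omega) k
        rw [hs]
        rw [show (⟨((i₀.succAbove a):ℕ), by have := (i₀.succAbove a).isLt; omega⟩ : Fin (q+1)) = a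
              from Fin.ext (by simp only [Fin.val_mk]; omega)]
      simp only [htail2]
      rw [show ⁅x (i₀.succAbove a), x i₀⁆ = -⁅x i₀, x (i₀.succAbove a)⁆ from (lie_skew _ _).symm]
      rw [hFconsNeg]
      rw [show ((-1:ℤ))^(((i₀.succAbove a):ℕ)+(i₀:ℕ)) = (-1:ℤ)^((i₀:ℕ)+(a:ℕ)) from by
        rw [show ((i₀.succAbove a):ℕ)+(i₀:ℕ) = (i₀:ℕ)+(a:ℕ) from by omega]]
      rw [smul_neg]
      exact add_neg_cancel _
  -- two slots in R
  have hTwoR : ∀ (x : Fin (q+2) → g) (i₀ i₁ : Fin (q+2)), i₀ ≠ i₁ →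
      x i₀ ∈ R → x i₁ ∈ R → ceDiff F x = 0 := by
    intro x i₀ i₁ hne h₀ h₁
    unfold ceDiff
    rw [Finset.sum_eq_zero, Finset.sum_eq_zero, add_zero]
    · intro i _
      apply Finset.sum_eq_zero
      intro j _
      by_cases hij : (i:ℕ) < (j:ℕ)
      · rw [dif_pos hij]
        by_cases h0 : i₀ ≠ i ∧ i₀ ≠ j
        · obtain ⟨m, hm⟩ := csurj i j hij (by have := j.isLt; omega) i₀ h0.1 h0.2
          rw [hFvanish (Fin.cons ⁅x i, x j⁆
                (fun k : Fin q =>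
                  x (i.succAbove ((⟨(j : ℕ) - 1, by have := j.isLt; omega⟩ :
                    Fin (q + 1)).succAbove k)))) m.succ
              (by rw [Fin.cons_succ, hm]; exact h₀), smul_zero]
        · by_cases h1 : i₁ ≠ i ∧ i₁ ≠ j
          · obtain ⟨m, hm⟩ := csurj i j hij (by have := j.isLt; omega) i₁ h1.1 h1.2
            rw [hFvanish (Fin.cons ⁅x i, x j⁆
                  (fun k : Fin q =>
                    x (i.succAbove ((⟨(j : ℕ) - 1, by have := j.isLt; omega⟩ :
                      Fin (q + 1)).succAbove k)))) m.succ
                (by rw [Fin.cons_succ, hm]; exact h₁), smul_zero]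
          · have h0' : i₀ = i ∨ i₀ = j := by
              by_contra hc; push_neg at hc; exact h0 hc
            have h1' : i₁ = i ∨ i₁ = j := by
              by_contra hc; push_neg at hc; exact h1 hc
            have hb : ⁅x i, x j⁆ ∈ R := by
              rcases h0' with rfl | rfl <;> rcases h1' with rfl | rfl
              · exact absurd rfl hne
              · exact R.lie_mem h₀ h₁
              · exact R.lie_mem h₁ h₀
              · exact absurd rfl hne
            rw [hFvanish (Fin.cons ⁅x i, x j⁆
                  (fun k : Fin q =>
                    x (i.succAbove ((⟨(j : ℕ) - 1, by have := j.isLt; omega⟩ :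
                      Fin (q + 1)).succAbove k)))) 0
                (by rw [Fin.cons_zero]; exact hb), smul_zero]
      · rw [dif_neg hij]
    · intro i _
      rcases ne_or_eq i₀ i with hne0 | rfl
      · obtain ⟨m, hm⟩ := Fin.exists_succAbove_eq hne0
        rw [hFvanish (x ∘ i.succAbove) m (by rw [Function.comp_apply, hm]; exact h₀),
          lie_zero, smul_zero]
      · obtain ⟨m, hm⟩ := Fin.exists_succAbove_eq (Ne.symm hne)
        rw [hFvanish (x ∘ i₀.succAbove) m (by rw [Function.comp_apply, hm]; exact h₁),
          lie_zero, smul_zero]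
  -- one slot in R, rest arbitrary
  have hOneR : ∀ (x : Fin (q+2) → g) (i₀ : Fin (q+2)), x i₀ ∈ R → ceDiff F x = 0 := by
    have step : ∀ (d m : ℕ), m + d = q + 2 → ∀ (x : Fin (q+2) → g) (i₀ : Fin (q+2)),
        x i₀ ∈ R → (∀ k : Fin (q+2), k ≠ i₀ → (k:ℕ) < m → x k ∈ N) → ceDiff F x = 0 := by
      intro d
      induction d with
      | zero =>
        intro m hm x i₀ h0 hN
        exact hKey x i₀ h0 (fun k hk => hN k hk (by have := k.isLt; omega))
      | succ d ih =>
        intro m hm x i₀ h0 hN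
        have hmlt : m < q+2 := by omega
        by_cases hk0 : (⟨m, hmlt⟩ : Fin (q+2)) = i₀
        · apply ih (m+1) (by omega) x i₀ h0
          intro k hk hlt
          rcases Nat.lt_or_ge (k:ℕ) m with h | h
          · exact hN k hk h
          · have hkm : k = (⟨m, hmlt⟩ : Fin (q+2)) := Fin.ext (by simp only [Fin.val_mk]; omega)
            exact absurd (hkm.trans hk0) hk
        · have hval' : p (x ⟨m, hmlt⟩) + (x ⟨m, hmlt⟩ - p (x ⟨m, hmlt⟩)) = x ⟨m, hmlt⟩ := by abel
          have hx : x = Function.update x ⟨m, hmlt⟩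
              (p (x ⟨m, hmlt⟩) + (x ⟨m, hmlt⟩ - p (x ⟨m, hmlt⟩))) := by
            rw [hval']
            exact (Function.update_eq_self _ x).symm
          rw [hx, hDadd]
          have hA : ceDiff F (Function.update x ⟨m, hmlt⟩ (p (x ⟨m, hmlt⟩))) = 0 := by
            apply ih (m+1) (by omega) _ i₀
            · rw [Function.update_of_ne (Ne.symm hk0)]; exact h0
            · intro k hk hlt
              by_cases hkm : k = (⟨m, hmlt⟩ : Fin (q+2))
              · subst hkm; rw [Function.update_self]; exact hpval _
              · rw [Function.update_of_ne hkm]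
                apply hN k hk
                have : (k:ℕ) ≠ m := fun hh => hkm (Fin.ext hh)
                omega
          have hB : ceDiff F (Function.update x ⟨m, hmlt⟩ (x ⟨m, hmlt⟩ - p (x ⟨m, hmlt⟩))) = 0 := by
            apply hTwoR _ i₀ ⟨m, hmlt⟩ (Ne.symm hk0)
            · rw [Function.update_of_ne (Ne.symm hk0)]; exact h0
            · rw [Function.update_self]; exact hsubR _
          rw [hA, hB, add_zero]
    intro x i₀ h0
    exact step (q+2) 0 (by omega) x i₀ h0 (fun k _ hlt => absurd hlt (by omega))
  -- main statement
  have hMain : ∀ x : Fin (q+2) → g, ceDiff F x = ceDiff F (fun k => p (x k)) := by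
    have step : ∀ (d m : ℕ), m + d = q + 2 → ∀ x : Fin (q+2) → g,
        ceDiff F (fun k => if (k:ℕ) < m then p (x k) else x k) = ceDiff F (fun k => p (x k)) := by
      intro d
      induction d with
      | zero =>
        intro m hm x
        have h1 : (fun k : Fin (q+2) => if (k:ℕ) < m then p (x k) else x k) = fun k => p (x k) := by
          funext k; rw [if_pos (by have := k.isLt; omega)]
        rw [h1]
      | succ d ih =>
        intro m hm x
        have hmlt : m < q+2 := by omega
        have hykm : (fun k : Fin (q+2) => if (k:ℕ) < m then p (x k) else x k) ⟨m, hmlt⟩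
            = x ⟨m, hmlt⟩ := if_neg (Nat.lt_irrefl m)
        have hval' : p (x ⟨m, hmlt⟩) + (x ⟨m, hmlt⟩ - p (x ⟨m, hmlt⟩)) = x ⟨m, hmlt⟩ := by abel
        have h1 : (fun k : Fin (q+2) => if (k:ℕ) < m then p (x k) else x k)
            = Function.update (fun k : Fin (q+2) => if (k:ℕ) < m then p (x k) else x k) ⟨m, hmlt⟩
              (p (x ⟨m, hmlt⟩) + (x ⟨m, hmlt⟩ - p (x ⟨m, hmlt⟩))) := by
          rw [hval', ← hykm]
          exact (Function.update_eq_self _ _).symm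
        rw [h1, hDadd]
        have hB : ceDiff F (Function.update (fun k : Fin (q+2) => if (k:ℕ) < m then p (x k) else x k)
            ⟨m, hmlt⟩ (x ⟨m, hmlt⟩ - p (x ⟨m, hmlt⟩))) = 0 := by
          apply hOneR _ ⟨m, hmlt⟩
          rw [Function.update_self]; exact hsubR _
        have hA : Function.update (fun k : Fin (q+2) => if (k:ℕ) < m then p (x k) else x k)
            ⟨m, hmlt⟩ (p (x ⟨m, hmlt⟩))
            = fun k : Fin (q+2) => if (k:ℕ) < m+1 then p (x k) else x k := by
          funext k
          by_cases hk : k = (⟨m, hmlt⟩ : Fin (q+2))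
          · subst hk; rw [Function.update_self, if_pos (Nat.lt_succ_self m)]
          · rw [Function.update_of_ne hk]
            have hkv : (k:ℕ) ≠ m := fun hh => hk (Fin.ext hh)
            by_cases h2 : (k:ℕ) < m
            · rw [if_pos h2, if_pos (by omega)]
            · rw [if_neg h2, if_neg (by omega)]
        rw [hB, add_zero, hA]
        exact ih (m+1) (by omega) x
    intro x
    have h0 : (fun k : Fin (q+2) => if (k:ℕ) < 0 then p (x k) else x k) = x := by
      funext k; rw [if_neg (by omega)]
    have hs := step (q+2) 0 (by omega) x
    rwa [h0] at hs
  refine ⟨hMain, ?_, ?_⟩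
  · intro h x _; exact h x
  · intro h x
    rw [hMain x]
    exact h _ (fun k => hpval _)
end

section
/- Let K be an algebraically closed field of characteristic 0, n a finite-dimensional nilpotent Lie algebra over K, a ⊆ n a central ideal contained in [n,n], and R a completely reducible Lie subalgebra of Der(n) leaving a stable. Assume that the only R-equivariant K-linear map n∧a → a is zero, where n∧a is the image of n⊗a in Λ²n (with the natural R-actions). Then for every R-equivariant alternating bilinear map ψ : n × n → a satisfying the cocycle condition ψ([x,y], z) + ψ([y,z], x) + ψ([z,x], y) = 0 for all x, y, z ∈ n, and for every t ∈ K, the bracket [x,y]_t := [x,y] + t·ψ(x,y) is a Lie bracket on the vector space n (i.e. the class of ψ is integrable: [i₂(ψ), i₂(ψ)] = 0). -/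
/-!
Restricted to `n × a`, an `R`-equivariant alternating `ψ` with values in `a` is an
`R`-equivariant map `n ∧ a → a`, so `ψ(n, a) = 0`. Hence the quadratic term
`ψ(ψ(x, y), z)` of the Jacobiator of `[x, y] + t ψ(x, y)` vanishes, and so do the brackets
with the central values of `ψ`; what is left is the Jacobi identity of `n` plus `t` times
the cocycle condition.
-/

attribute [local instance 100] LieRing.ofAssociativeRing

theorem lie_lie_add_lie_lie_add_lie_lie {L : Type*} [LieRing L] (x y z : L) :
    ⁅⁅x, y⁆, z⁆ + ⁅⁅y, z⁆, x⁆ + ⁅⁅z, x⁆, y⁆ = 0 := by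
  rw [← lie_skew ⁅x, y⁆ z, ← lie_skew ⁅y, z⁆ x, ← lie_skew ⁅z, x⁆ y, ← neg_add, ← neg_add,
    neg_eq_zero, ← lie_jacobi x y z]
  abel

theorem jacobi_lie_add_smul_of_cocycle {K N : Type*} [CommRing K] [LieRing N]
    [LieAlgebra K N] (ψ : N →ₗ[K] N →ₗ[K] N) (hcentral : ∀ u v w : N, ⁅ψ u v, w⁆ = 0)
    (hψψ : ∀ u v w : N, ψ (ψ u v) w = 0)
    (hcoc : ∀ x y z : N, ψ ⁅x, y⁆ z + ψ ⁅y, z⁆ x + ψ ⁅z, x⁆ y = 0) (t : K) (x y z : N) :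
    (⁅(⁅x, y⁆ + t • ψ x y), z⁆ + t • ψ (⁅x, y⁆ + t • ψ x y) z)
      + (⁅(⁅y, z⁆ + t • ψ y z), x⁆ + t • ψ (⁅y, z⁆ + t • ψ y z) x)
      + (⁅(⁅z, x⁆ + t • ψ z x), y⁆ + t • ψ (⁅z, x⁆ + t • ψ z x) y) = 0 := by
  simp only [add_lie, smul_lie, map_add, map_smul, LinearMap.add_apply, LinearMap.smul_apply,
    hcentral, hψψ, smul_zero, add_zero]
  calc ⁅⁅x, y⁆, z⁆ + t • ψ ⁅x, y⁆ z + (⁅⁅y, z⁆, x⁆ + t • ψ ⁅y, z⁆ x)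
        + (⁅⁅z, x⁆, y⁆ + t • ψ ⁅z, x⁆ y)
      = (⁅⁅x, y⁆, z⁆ + ⁅⁅y, z⁆, x⁆ + ⁅⁅z, x⁆, y⁆)
        + t • (ψ ⁅x, y⁆ z + ψ ⁅y, z⁆ x + ψ ⁅z, x⁆ y) := by
        rw [smul_add, smul_add]; abel
    _ = 0 := by rw [lie_lie_add_lie_lie_add_lie_lie, hcoc, smul_zero, add_zero]

theorem stmt_15_general {K : Type} [Field K]
    {N : Type} [LieRing N] [LieAlgebra K N]
    (a : LieIdeal K N)
    (hcentral : ∀ c ∈ a, ∀ x : N, ⁅c, x⁆ = 0)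
    -- `R`: a Lie subalgebra of `Der(n)` (inside `End(n)` with the commutator bracket)
    (R : LieSubalgebra K (Module.End K N))
    -- the only `R`-equivariant map `n∧a → a` is zero
    (hHom : ∀ β : N →ₗ[K] N →ₗ[K] N,
      (∀ x : N, ∀ c ∈ a, β x c ∈ a) →
      (∀ c ∈ a, ∀ c' ∈ a, β c c' = -β c' c) →
      (∀ δ ∈ R, ∀ x : N, ∀ c ∈ a, δ (β x c) = β (δ x) c + β x (δ c)) →
      ∀ x : N, ∀ c ∈ a, β x c = 0) :
    ∀ ψ : N →ₗ[K] N →ₗ[K] N,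
      (∀ x, ψ x x = 0) →
      (∀ x y, ψ x y ∈ a) →
      (∀ δ ∈ R, ∀ x y, δ (ψ x y) = ψ (δ x) y + ψ x (δ y)) →
      (∀ x y z, ψ ⁅x, y⁆ z + ψ ⁅y, z⁆ x + ψ ⁅z, x⁆ y = 0) →
      ∀ t : K, ∀ x y z : N,
        (⁅(⁅x, y⁆ + t • ψ x y), z⁆ + t • ψ (⁅x, y⁆ + t • ψ x y) z)
          + (⁅(⁅y, z⁆ + t • ψ y z), x⁆ + t • ψ (⁅y, z⁆ + t • ψ y z) x)
          + (⁅(⁅z, x⁆ + t • ψ z x), y⁆ + t • ψ (⁅z, x⁆ + t • ψ z x) y) = 0 := by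
  intro ψ (hψ : ψ.IsAlt) hval hequiv hcoc
  have hψa : ∀ x, ∀ c ∈ a, ψ x c = 0 :=
    hHom ψ (fun x c _ => hval x c) (fun c _ c' _ => (hψ.neg c' c).symm)
      (fun δ hδ x c _ => hequiv δ hδ x c)
  exact jacobi_lie_add_smul_of_cocycle ψ (fun u v => hcentral _ (hval u v))
    (fun u v w => hψ.eq_iff.mpr (hψa w _ (hval u v))) hcoc

/-- Let `n` be a finite-dimensional nilpotent Lie algebra over an
algebraically closed field `K` of characteristic 0, `a ⊆ n` a central ideal contained
in `[n,n]`, and `R` a completely reducible Lie subalgebra of `Der(n)` leaving `a`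
stable.  The hypothesis `Hom_R(n∧a, a) = 0` is encoded via bilinear maps `β` whose
restriction to `n × a` has values in `a`, is antisymmetric on `a × a` and
`R`-equivariant (such restrictions correspond exactly to linear maps `n∧a → a`).
Then every `R`-equivariant alternating 2-cocycle `ψ` with values in `a` is integrable:
for every `t ∈ K`, `[x,y] + t·ψ(x,y)` is a Lie bracket. -/
theorem stmt_15 {K : Type} [Field K] [CharZero K] [IsAlgClosed K]
    {N : Type} [LieRing N] [LieAlgebra K N] [FiniteDimensional K N]
    [LieRing.IsNilpotent N]
    (a : LieIdeal K N)
    (hcentral : ∀ c ∈ a, ∀ x : N, ⁅c, x⁆ = 0)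
    (hsub : a ≤ ⁅(⊤ : LieIdeal K N), (⊤ : LieIdeal K N)⁆)
    -- `R`: a Lie subalgebra of `Der(n)` (inside `End(n)` with the commutator bracket)
    (R : LieSubalgebra K (Module.End K N))
    (hder : ∀ δ ∈ R, ∀ x y : N, δ ⁅x, y⁆ = ⁅δ x, y⁆ + ⁅x, δ y⁆)
    (hstab : ∀ δ ∈ R, ∀ c ∈ a, δ c ∈ a)
    -- complete reducibility: the natural representation of `R` on `n` is semisimple
    (hss : ∀ W : Submodule K N, (∀ δ ∈ R, ∀ x ∈ W, δ x ∈ W) →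
      ∃ W' : Submodule K N, IsCompl W W' ∧ ∀ δ ∈ R, ∀ x ∈ W', δ x ∈ W')
    -- the only `R`-equivariant map `n∧a → a` is zero
    (hHom : ∀ β : N →ₗ[K] N →ₗ[K] N,
      (∀ x : N, ∀ c ∈ a, β x c ∈ a) →
      (∀ c ∈ a, ∀ c' ∈ a, β c c' = -β c' c) →
      (∀ δ ∈ R, ∀ x : N, ∀ c ∈ a, δ (β x c) = β (δ x) c + β x (δ c)) →
      ∀ x : N, ∀ c ∈ a, β x c = 0) :
    ∀ ψ : N →ₗ[K] N →ₗ[K] N,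
      (∀ x, ψ x x = 0) →
      (∀ x y, ψ x y ∈ a) →
      (∀ δ ∈ R, ∀ x y, δ (ψ x y) = ψ (δ x) y + ψ x (δ y)) →
      (∀ x y z, ψ ⁅x, y⁆ z + ψ ⁅y, z⁆ x + ψ ⁅z, x⁆ y = 0) →
      ∀ t : K, ∀ x y z : N,
        (⁅(⁅x, y⁆ + t • ψ x y), z⁆ + t • ψ (⁅x, y⁆ + t • ψ x y) z)
          + (⁅(⁅y, z⁆ + t • ψ y z), x⁆ + t • ψ (⁅y, z⁆ + t • ψ y z) x)
          + (⁅(⁅z, x⁆ + t • ψ z x), y⁆ + t • ψ (⁅z, x⁆ + t • ψ z x) y) = 0 :=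
  stmt_15_general a hcentral R hHom
end

section
/- Let K be an algebraically closed field of characteristic 0 and n ∈ {7, 8}. For every t ∈ K, the alternating bilinear bracket on K^n with basis e₁,…,e_n determined by [e₁, e_i] = e_{i+1} for 2 ≤ i ≤ n−1 with i ≠ 3; [e₂, e_i] = (1 − (i−4)t)·e_{i+2} for 4 ≤ i ≤ n−2; [e₃, e_i] = t·e_{i+3} for 4 ≤ i ≤ n−3; and [e_i, e_j] = 0 for all other pairs i < j, satisfies the Jacobi identity, hence defines a Lie algebra 𝔞_{4,n}(t). -/
/-- The basis vector `e_{p+1}` of `K^n` (0-based index `p`). -/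
def stdVec (K : Type) [Field K] (n p : ℕ) : Fin n → K :=
  fun k => if (k : ℕ) = p then 1 else 0

/-- The values `[e_{i+1}, e_{j+1}]` (0-based `i < j`) of the bracket of `𝔞_{4,n}(t)`:
`[e₁,e_i] = e_{i+1}` for `2 ≤ i ≤ n−1`, `i ≠ 3`; `[e₂,e_i] = (1−(i−4)t)e_{i+2}` for
`4 ≤ i ≤ n−2`; `[e₃,e_i] = t e_{i+3}` for `4 ≤ i ≤ n−3`; all other brackets `0`. -/
noncomputable def aBrVal {K : Type} [Field K] (n : ℕ) (t : K) (i j : ℕ) : Fin n → K :=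
  if i = 0 ∧ 1 ≤ j ∧ j + 2 ≤ n ∧ j ≠ 2 then stdVec K n (j + 1)
  else if i = 1 ∧ 3 ≤ j ∧ j + 3 ≤ n then (1 - ((j : K) - 3) * t) • stdVec K n (j + 2)
  else if i = 2 ∧ 3 ≤ j ∧ j + 4 ≤ n then t • stdVec K n (j + 3)
  else 0

/-- The alternating bilinear bracket of `𝔞_{4,n}(t)` on `K^n`, determined by the values
`aBrVal` on basis vectors together with antisymmetry. -/
noncomputable def aBr {K : Type} [Field K] (n : ℕ) (t : K) (x y : Fin n → K) :
    Fin n → K :=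
  ∑ i : Fin n, ∑ j : Fin n,
    (x i * y j) •
      (if (i : ℕ) < (j : ℕ) then aBrVal n t i j
       else if (j : ℕ) < (i : ℕ) then -aBrVal n t j i else 0)

/-!
The bracket is graded: `[e_i, e_j]` is a multiple of `e_{i+j}`, so the jacobiator of three basis
vectors is a scalar multiple of `e_{i+j+k}` and vanishes as soon as `i + j + k > n`. That scalar
is alternating in `(i, j, k)`, so it suffices to check `i < j < k` with `i + j + k ≤ n`: for
`n = 8` these are the four triples `(1,2,3), (1,2,4), (1,2,5), (1,3,4)`, each a polynomial
identity in `t`. The jacobiator is trilinear, so vanishing on basis triples gives the theorem.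
(Indices here are 1-based; in the code they are 0-based and `[e_i, e_j] ∈ K e_{i+j+1}`.)
-/

section Jacobiator

variable {R M : Type*} [CommSemiring R] [AddCommMonoid M] [Module R M]

def jacobiator (B : M →ₗ[R] M →ₗ[R] M) (x y z : M) : M :=
  B (B x y) z + B (B y z) x + B (B z x) y

variable (B : M →ₗ[R] M →ₗ[R] M)

lemma jacobiator_rotate (x y z : M) : jacobiator B x y z = jacobiator B y z x := by
  unfold jacobiator
  abel

lemma jacobiator_eq_zero_of_basis_left {ι : Type*} (b : Module.Basis ι R M) {y z : M}
    (h : ∀ i, jacobiator B (b i) y z = 0) (x : M) : jacobiator B x y z = 0 := by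
  have hlin : B.flip z ∘ₗ B.flip y + B (B y z) + B.flip y ∘ₗ B z = 0 :=
    b.ext fun i => by simpa [jacobiator] using h i
  simpa [jacobiator] using LinearMap.congr_fun hlin x

/-- The jacobiator is cyclic and linear in its first argument, so basis vectors can be fed into
one slot at a time. -/
lemma jacobiator_eq_zero_of_basis {ι : Type*} (b : Module.Basis ι R M)
    (h : ∀ i j k, jacobiator B (b i) (b j) (b k) = 0) (x y z : M) :
    jacobiator B x y z = 0 := by
  have h₁ : ∀ x j k, jacobiator B x (b j) (b k) = 0 := fun x j k =>
    jacobiator_eq_zero_of_basis_left B b (fun i => h i j k) x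
  have h₂ : ∀ x y k, jacobiator B x y (b k) = 0 := fun x y k => by
    rw [jacobiator_rotate]
    exact jacobiator_eq_zero_of_basis_left B b
      (fun j => by rw [jacobiator_rotate, jacobiator_rotate]; exact h₁ x j k) y
  rw [jacobiator_rotate, jacobiator_rotate]
  exact jacobiator_eq_zero_of_basis_left B b
    (fun k => by rw [jacobiator_rotate]; exact h₂ x y k) z

end Jacobiator

lemma forall_eq_zero_of_alternating {α M : Type*} [LinearOrder α] [AddCommGroup M]
    (S : α → α → α → M) (rotate : ∀ p q r, S p q r = S q r p)
    (swap : ∀ p q r, S q p r = -S p q r) (self : ∀ p r, S p p r = 0)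
    (sorted : ∀ p q r, p < q → q < r → S p q r = 0) (p q r : α) : S p q r = 0 := by
  have increasing : ∀ p q r, p < q → S p q r = 0 := by
    intro p q r hpq
    rcases lt_trichotomy q r with hqr | rfl | hrq
    · exact sorted p q r hpq hqr
    · rw [rotate, self]
    rcases lt_trichotomy p r with hpr | rfl | hrp
    · rw [← neg_eq_zero, ← swap, rotate, sorted p r q hpr hrq]
    · rw [rotate, rotate, self]
    · rw [rotate, rotate, sorted r p q hrp hpq]
  rcases lt_trichotomy p q with hpq | rfl | hqp
  · exact increasing p q r hpq
  · exact self p r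
  · rw [← neg_eq_zero, ← swap, increasing q p r hqp]

section StructureConstants

variable {K : Type} [Field K]

lemma stdVec_eq_zero_of_le {n p : ℕ} (h : n ≤ p) : stdVec K n p = 0 := by
  funext k
  simp [stdVec, show (k : ℕ) ≠ p by omega]

lemma stdVec_eq_single {n : ℕ} (i : Fin n) : stdVec K n i = Pi.single i 1 := by
  funext k
  simp [stdVec, Pi.single_apply, Fin.ext_iff]

def aCoeff (n : ℕ) (t : K) (i j : ℕ) : K :=
  if i = 0 ∧ 1 ≤ j ∧ j + 2 ≤ n ∧ j ≠ 2 then 1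
  else if i = 1 ∧ 3 ≤ j ∧ j + 3 ≤ n then 1 - ((j : K) - 3) * t
  else if i = 2 ∧ 3 ≤ j ∧ j + 4 ≤ n then t
  else 0

def aStructConst (n : ℕ) (t : K) (i j : ℕ) : K :=
  if i < j then aCoeff n t i j else if j < i then -aCoeff n t j i else 0

variable (n : ℕ) (t : K)

lemma aStructConst_swap (i j : ℕ) : aStructConst n t j i = -aStructConst n t i j := by
  unfold aStructConst
  split_ifs <;> first | omega | simp

lemma aStructConst_self (i : ℕ) : aStructConst n t i i = 0 := by
  simp [aStructConst]

lemma aStructConst_eq_zero_of_le {i j : ℕ} (h : n ≤ i + j + 1) : aStructConst n t i j = 0 := by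
  unfold aStructConst aCoeff
  split_ifs <;> first | omega | simp

lemma aBrVal_eq_smul_stdVec (i j : ℕ) :
    aBrVal n t i j = aCoeff n t i j • stdVec K n (i + j + 1) := by
  unfold aBrVal aCoeff
  split_ifs with h₀ h₁ h₂
  · obtain ⟨rfl, -⟩ := h₀
    simp [add_comm]
  · obtain ⟨rfl, -⟩ := h₁
    rw [show 1 + j + 1 = j + 2 by omega]
  · obtain ⟨rfl, -⟩ := h₂
    rw [show 2 + j + 1 = j + 3 by omega]
  · simp

noncomputable def aBrBilin : (Fin n → K) →ₗ[K] (Fin n → K) →ₗ[K] (Fin n → K) :=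
  Fintype.linearCombination K fun i : Fin n =>
    Fintype.linearCombination K fun j : Fin n => aStructConst n t i j • stdVec K n (i + j + 1)

lemma aBrBilin_apply (x y : Fin n → K) : aBrBilin n t x y = aBr n t x y := by
  have hterm : ∀ i j : ℕ,
      (if i < j then aBrVal n t i j else if j < i then -aBrVal n t j i else 0)
        = aStructConst n t i j • stdVec K n (i + j + 1) := by
    intro i j
    unfold aStructConst
    split_ifs
    · exact aBrVal_eq_smul_stdVec n t i j
    · rw [aBrVal_eq_smul_stdVec, add_comm j i, neg_smul]
    · simp
  simp only [aBrBilin, aBr, Fintype.linearCombination_apply, LinearMap.sum_apply,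
    LinearMap.smul_apply, Finset.smul_sum, smul_smul, hterm, mul_assoc]

lemma aBrBilin_stdVec (a b : ℕ) :
    aBrBilin n t (stdVec K n a) (stdVec K n b)
      = aStructConst n t a b • stdVec K n (a + b + 1) := by
  rcases lt_or_ge a n with ha | ha
  · rcases lt_or_ge b n with hb | hb
    · rw [show stdVec K n a = Pi.single (⟨a, ha⟩ : Fin n) 1 from stdVec_eq_single ⟨a, ha⟩,
        show stdVec K n b = Pi.single (⟨b, hb⟩ : Fin n) 1 from stdVec_eq_single ⟨b, hb⟩]
      simp [aBrBilin]
    · rw [stdVec_eq_zero_of_le hb, stdVec_eq_zero_of_le (show n ≤ a + b + 1 by omega), map_zero,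
        smul_zero]
  · rw [stdVec_eq_zero_of_le ha, stdVec_eq_zero_of_le (show n ≤ a + b + 1 by omega), map_zero,
      LinearMap.zero_apply, smul_zero]

def aJacobiCoeff (p q r : ℕ) : K :=
  aStructConst n t p q * aStructConst n t (p + q + 1) r
    + aStructConst n t q r * aStructConst n t (q + r + 1) p
    + aStructConst n t r p * aStructConst n t (r + p + 1) q

lemma jacobiator_aBrBilin_stdVec (p q r : ℕ) :
    jacobiator (aBrBilin n t) (stdVec K n p) (stdVec K n q) (stdVec K n r)
      = aJacobiCoeff n t p q r • stdVec K n (p + q + r + 2) := by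
  simp only [jacobiator, aJacobiCoeff, aBrBilin_stdVec, map_smul, LinearMap.smul_apply,
    smul_smul, add_smul]
  rw [show q + r + 1 + p + 1 = p + q + r + 2 by omega,
    show r + p + 1 + q + 1 = p + q + r + 2 by omega,
    show p + q + 1 + r + 1 = p + q + r + 2 by omega]

lemma aJacobiCoeff_rotate (p q r : ℕ) : aJacobiCoeff n t p q r = aJacobiCoeff n t q r p := by
  unfold aJacobiCoeff
  ring

lemma aJacobiCoeff_swap (p q r : ℕ) : aJacobiCoeff n t q p r = -aJacobiCoeff n t p q r := by
  unfold aJacobiCoeff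
  rw [aStructConst_swap n t p q, aStructConst_swap n t r p, aStructConst_swap n t q r,
    add_comm q p, add_comm p r, add_comm r q]
  ring

lemma aJacobiCoeff_self (p r : ℕ) : aJacobiCoeff n t p p r = 0 := by
  unfold aJacobiCoeff
  rw [aStructConst_self, aStructConst_swap n t p r, add_comm r p]
  ring

lemma aJacobiCoeff_eq_zero_of_le {p q r : ℕ} (h : n ≤ p + q + r + 2) :
    aJacobiCoeff n t p q r = 0 := by
  unfold aJacobiCoeff
  rw [aStructConst_eq_zero_of_le n t (i := p + q + 1) (by omega),
    aStructConst_eq_zero_of_le n t (i := q + r + 1) (by omega),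
    aStructConst_eq_zero_of_le n t (i := r + p + 1) (by omega)]
  ring

lemma aJacobiCoeff_eq_zero_of_lt (hn : n = 7 ∨ n = 8) {p q r : ℕ} (hpq : p < q) (hqr : q < r) :
    aJacobiCoeff n t p q r = 0 := by
  rcases le_or_gt n (p + q + r + 2) with hle | hlt
  · exact aJacobiCoeff_eq_zero_of_le n t hle
  have hp : p ≤ 1 := by omega
  have hq : q ≤ 2 := by omega
  have hr : r ≤ 4 := by omega
  rcases hn with rfl | rfl <;> interval_cases p <;> interval_cases q <;> interval_cases r <;>
    first | omega | (simp [aJacobiCoeff, aStructConst, aCoeff] <;> ring)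

end StructureConstants

theorem stmt_16_general {K : Type} [Field K] {n : ℕ}
    (hn : n = 7 ∨ n = 8) (t : K) :
    ∀ x y z : Fin n → K,
      aBr n t (aBr n t x y) z + aBr n t (aBr n t y z) x + aBr n t (aBr n t z x) y = 0 := by
  have hcoeff : ∀ p q r, aJacobiCoeff n t p q r = 0 :=
    forall_eq_zero_of_alternating _ (aJacobiCoeff_rotate n t) (aJacobiCoeff_swap n t)
      (aJacobiCoeff_self n t) fun _ _ _ => aJacobiCoeff_eq_zero_of_lt n t hn
  have hbasis : ∀ i j k : Fin n, jacobiator (aBrBilin n t)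
      (Pi.basisFun K (Fin n) i) (Pi.basisFun K (Fin n) j) (Pi.basisFun K (Fin n) k) = 0 := by
    intro i j k
    simp only [Pi.basisFun_apply, ← stdVec_eq_single]
    rw [jacobiator_aBrBilin_stdVec, hcoeff, zero_smul]
  intro x y z
  simpa only [jacobiator, aBrBilin_apply] using
    jacobiator_eq_zero_of_basis _ (Pi.basisFun K (Fin n)) hbasis x y z

/-- For `n ∈ {7,8}` and every `t ∈ K`, the bracket of `𝔞_{4,n}(t)`
satisfies the Jacobi identity, hence defines a Lie algebra. -/
theorem stmt_16 {K : Type} [Field K] [CharZero K] [IsAlgClosed K] {n : ℕ}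
    (hn : n = 7 ∨ n = 8) (t : K) :
    ∀ x y z : Fin n → K,
      aBr n t (aBr n t x y) z + aBr n t (aBr n t y z) x + aBr n t (aBr n t z x) y = 0 :=
  stmt_16_general hn t
end

section
/- Let K be a field of characteristic 0 and consider the polynomial ring K[X₁₂, X₁₄, X₁₅, X₁₆, X₁₇, X₁₈, X₂₄, X₂₅, X₂₆, X₂₇, X₃₄, X₃₅, X₃₆]. Then the polynomial X₁₂·X₁₇·X₁₈·X₃₄² belongs to the ideal generated by the six Jacobi polynomials J₁₂₄ = X₁₂X₃₄ − X₂₄X₁₆ + X₁₄X₂₅, J₁₂₅ = X₁₂X₃₅ − X₂₅X₁₇ + X₁₅X₂₆, J₁₂₆ = X₁₂X₃₆ − X₂₆X₁₈ + X₁₆X₂₇, J₁₃₄ = −X₃₄X₁₇ + X₁₄X₃₅, J₁₃₅ = −X₃₅X₁₈ + X₁₅X₃₆, J₂₃₄ = −X₃₄X₂₇ + X₂₄X₃₆. (Since these six polynomials are among the generators of the defining ideal J_n of the scheme 𝔏_n^T for n ≥ 9, the class of X₁₂X₁₇X₁₈X₃₄ in K[X_{ij}]/J_n has vanishing square.) 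-/
/-!
Write `T = X₁₂X₁₇X₁₈X₃₄²`. Modulo the Jacobi relations the factor `X₁₂` of `T` can be eliminated
in three ways: directly by `J₁₂₄`, or after turning `X₁₇X₃₄` into `X₁₄X₃₅` (`J₁₃₄`) by `J₁₂₅`,
or after further turning `X₁₈X₃₅` into `X₁₅X₃₆` (`J₁₃₅`) by `J₁₂₆`. In the sum of the three
expressions the middle terms cancel, leaving `X₁₆(X₁₇X₁₈X₂₄X₃₄ − X₁₄X₁₅X₂₇X₃₄)`, which vanishes
by `J₁₃₄`, `J₁₃₅` and `J₂₃₄`. Hence `3T` lies in the ideal, and so does `T` once `3` is invertible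
(it does not in characteristic `3`).
-/

open MvPolynomial

theorem three_mul_eq_zero_of_jacobi {R : Type*} [CommRing R]
    (x12 x14 x15 x16 x17 x18 x24 x25 x26 x27 x34 x35 x36 : R)
    (j124 : x12 * x34 - x24 * x16 + x14 * x25 = 0)
    (j125 : x12 * x35 - x25 * x17 + x15 * x26 = 0)
    (j126 : x12 * x36 - x26 * x18 + x16 * x27 = 0)
    (j134 : -x34 * x17 + x14 * x35 = 0)
    (j135 : -x35 * x18 + x15 * x36 = 0)
    (j234 : -x34 * x27 + x24 * x36 = 0) :
    3 * (x12 * x17 * x18 * x34 ^ 2) = 0 := by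
  have via124 : x12 * x17 * x18 * x34 ^ 2 =
      x16 * x17 * x18 * x24 * x34 - x14 * x17 * x18 * x25 * x34 := by
    linear_combination (x17 * x18 * x34) * j124
  have via125 : x12 * x17 * x18 * x34 ^ 2 =
      x14 * x17 * x18 * x25 * x34 - x14 * x15 * x18 * x26 * x34 := by
    linear_combination (x14 * x18 * x34) * j125 - (x12 * x18 * x34) * j134
  have via126 : x12 * x17 * x18 * x34 ^ 2 =
      x14 * x15 * x18 * x26 * x34 - x14 * x15 * x16 * x27 * x34 := by
    linear_combination (x14 * x15 * x34) * j126 - (x12 * x18 * x34) * j134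
      - (x12 * x14 * x34) * j135
  have remainder : x16 * x17 * x18 * x24 * x34 = x14 * x15 * x16 * x27 * x34 := by
    linear_combination (-(x16 * x18 * x24)) * j134 - (x14 * x16 * x24) * j135
      + (x14 * x15 * x16) * j234
  linear_combination via124 + via125 + via126 + remainder

theorem mem_of_jacobi_mem {R : Type*} [CommRing R] (h3 : IsUnit (3 : R)) (I : Ideal R)
    (x12 x14 x15 x16 x17 x18 x24 x25 x26 x27 x34 x35 x36 : R)
    (j124 : x12 * x34 - x24 * x16 + x14 * x25 ∈ I)
    (j125 : x12 * x35 - x25 * x17 + x15 * x26 ∈ I)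
    (j126 : x12 * x36 - x26 * x18 + x16 * x27 ∈ I)
    (j134 : -x34 * x17 + x14 * x35 ∈ I)
    (j135 : -x35 * x18 + x15 * x36 ∈ I)
    (j234 : -x34 * x27 + x24 * x36 ∈ I) :
    x12 * x17 * x18 * x34 ^ 2 ∈ I := by
  rw [← Ideal.Quotient.eq_zero_iff_mem] at *
  simp only [map_add, map_sub, map_mul, map_neg, map_pow] at *
  refine ((h3.map (Ideal.Quotient.mk I)).mul_right_eq_zero).mp ?_
  rw [map_ofNat]
  exact three_mul_eq_zero_of_jacobi _ _ _ _ _ _ _ _ _ _ _ _ _ j124 j125 j126 j134 j135 j234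

/-- Variables: `X 0 = X₁₂, X 1 = X₁₄, X 2 = X₁₅, X 3 = X₁₆, X 4 = X₁₇, X 5 = X₁₈,`
`X 6 = X₂₄, X 7 = X₂₅, X 8 = X₂₆, X 9 = X₂₇, X 10 = X₃₄, X 11 = X₃₅, X 12 = X₃₆`. -/
theorem stmt_18 (K : Type) [Field K] [CharZero K] :
    (X 0 * X 4 * X 5 * (X 10) ^ 2 : MvPolynomial (Fin 13) K) ∈
      Ideal.span ({
        X 0 * X 10 - X 6 * X 3 + X 1 * X 7,     -- J₁₂₄ = X₁₂X₃₄ − X₂₄X₁₆ + X₁₄X₂₅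
        X 0 * X 11 - X 7 * X 4 + X 2 * X 8,     -- J₁₂₅ = X₁₂X₃₅ − X₂₅X₁₇ + X₁₅X₂₆
        X 0 * X 12 - X 8 * X 5 + X 3 * X 9,     -- J₁₂₆ = X₁₂X₃₆ − X₂₆X₁₈ + X₁₆X₂₇
        -(X 10) * X 4 + X 1 * X 11,             -- J₁₃₄ = −X₃₄X₁₇ + X₁₄X₃₅
        -(X 11) * X 5 + X 2 * X 12,             -- J₁₃₅ = −X₃₅X₁₈ + X₁₅X₃₆
        -(X 10) * X 9 + X 6 * X 12} :           -- J₂₃₄ = −X₃₄X₂₇ + X₂₄X₃₆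
        Set (MvPolynomial (Fin 13) K)) := by
  have h3 : IsUnit (3 : MvPolynomial (Fin 13) K) := by
    simpa only [map_ofNat] using (three_ne_zero (α := K)).isUnit.map (C : K →+* _)
  refine mem_of_jacobi_mem h3 _ (X 0) (X 1) (X 2) (X 3) (X 4) (X 5) (X 6) (X 7) (X 8) (X 9)
    (X 10) (X 11) (X 12) ?_ ?_ ?_ ?_ ?_ ?_ <;>
  exact Ideal.subset_span (by simp)
end
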